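/- arXiv:2504.05609 — 11 statements merged into one kernel-verified Lean document; each statement's English description precedes it below -/
import Mathlib

section
/- Let I be a nonempty finite index set, let x̄ ∈ ℝⁿ, and for each i ∈ I let f_i : ℝⁿ → ℝ be locally Lipschitz around x̄. Define f := max_{i ∈ I} f_i and the active index set I_max(x̄) := {i ∈ I : f_i(x̄) = f(x̄)}. Then for every d ∈ ℝⁿ one has f'(x̄; d) = max_{i ∈ I_max(x̄)} f_i'(x̄; d), where f'(x; d) denotes the upper directional derivative. -/
open Filter

/-- The upper directional derivative of `f` at `x` in direction `d`:
`f'(x; d) := limsup_{t → 0⁺} (f(x + t d) − f(x))/t`. -/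
noncomputable def upperDirDeriv {n : ℕ} (f : EuclideanSpace ℝ (Fin n) → ℝ)
    (x d : EuclideanSpace ℝ (Fin n)) : ℝ :=
  Filter.limsup (fun t : ℝ => (f (x + t • d) - f x) / t) (nhdsWithin 0 (Set.Ioi 0))

/-!
Near `xb` every inactive `f i` stays strictly below an active one, so `F` agrees with the maximum
over the active indices only; as these all share the value `F xb`, the difference quotient of `F`
is the maximum of the difference quotients of the active `f i`. Lipschitz continuity bounds all
these quotients, and for bounded functions `limsup` commutes with finite maxima.
-/

open Topology Finset

section ActiveIndices

variable {ι X β : Type*} [Fintype ι] [Nonempty ι] [LinearOrder β]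

def activeIndices (f : ι → X → β) (x : X) : Finset ι :=
  univ.filter fun i => f i x = univ.sup' univ_nonempty (f · x)

theorem mem_activeIndices {f : ι → X → β} {x : X} {i : ι} :
    i ∈ activeIndices f x ↔ f i x = univ.sup' univ_nonempty (f · x) := by
  simp [activeIndices]

theorem activeIndices_nonempty (f : ι → X → β) (x : X) : (activeIndices f x).Nonempty := by
  obtain ⟨i, -, hi⟩ := exists_mem_eq_sup' univ_nonempty (f · x)
  exact ⟨i, mem_activeIndices.2 hi.symm⟩

theorem eventually_sup'_eq_sup'_activeIndices [TopologicalSpace X] [TopologicalSpace β]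
    [OrderClosedTopology β] {f : ι → X → β} {x : X} (hf : ∀ i, ContinuousAt (f i) x) :
    ∀ᶠ y in 𝓝 x, univ.sup' univ_nonempty (f · y) =
      (activeIndices f x).sup' (activeIndices_nonempty f x) (f · y) := by
  obtain ⟨i₀, hi₀⟩ := activeIndices_nonempty f x
  have hinactive j : ∀ᶠ y in 𝓝 x, j ∉ activeIndices f x → f j y < f i₀ y := by
    by_cases hj : j ∈ activeIndices f x
    · exact Eventually.of_forall fun _ h => absurd hj h
    have hlt : f j x < f i₀ x := by
      rw [mem_activeIndices.1 hi₀]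
      exact lt_of_le_of_ne (le_sup' (f · x) (mem_univ j)) (mt mem_activeIndices.2 hj)
    exact ((hf j).eventually_lt (hf i₀) hlt).mono fun _ h _ => h
  filter_upwards [eventually_all.2 hinactive] with y hy
  refine le_antisymm (sup'_le _ _ fun i _ => ?_) (sup'_mono _ (subset_univ _) _)
  by_cases hi : i ∈ activeIndices f x
  · exact le_sup' (f · y) hi
  · exact (hy i hi).le.trans (le_sup' (f · y) hi₀)

end ActiveIndices

theorem Finset.sup'_sub_div {ι : Type*} {s : Finset ι} (hs : s.Nonempty) (g : ι → ℝ) (c : ℝ)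
    {t : ℝ} (ht : 0 ≤ t) : (s.sup' hs g - c) / t = s.sup' hs fun i => (g i - c) / t :=
  apply_sup'_eq_sup'_comp hs (fun y => (y - c) / t) fun _ _ =>
    (show Monotone fun y : ℝ => (y - c) / t from
      fun _ _ h => div_le_div_of_nonneg_right (sub_le_sub_right h c) ht).map_max

section Slope

variable {E : Type*} [SeminormedAddCommGroup E] [NormedSpace ℝ E]

theorem tendsto_add_smul_nhdsGT_zero (x d : E) :
    Tendsto (fun t : ℝ => x + t • d) (𝓝[>] 0) (𝓝 x) := by
  have : Continuous fun t : ℝ => x + t • d := by fun_prop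
  simpa using (this.tendsto 0).mono_left (nhdsWithin_le_nhds (s := Set.Ioi 0))

theorem LipschitzOnWith.eventually_abs_slope_le {f : E → ℝ} {K : NNReal} {U : Set E} {x : E}
    (hf : LipschitzOnWith K f U) (hU : U ∈ 𝓝 x) (d : E) :
    ∀ᶠ t in 𝓝[>] (0 : ℝ), |(f (x + t • d) - f x) / t| ≤ K * ‖d‖ := by
  filter_upwards [tendsto_add_smul_nhdsGT_zero x d hU, self_mem_nhdsWithin] with t htU ht
  have ht : (0 : ℝ) < t := ht
  have hlip := hf.dist_le_mul _ htU _ (mem_of_mem_nhds hU)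
  rw [Real.dist_eq, dist_eq_norm, add_sub_cancel_left, norm_smul, Real.norm_eq_abs,
    abs_of_pos ht] at hlip
  rw [abs_div, abs_of_pos ht, div_le_iff₀ ht]
  linarith

theorem LipschitzOnWith.isBoundedUnder_abs_slope {f : E → ℝ} {K : NNReal} {U : Set E} {x : E}
    (hf : LipschitzOnWith K f U) (hU : U ∈ 𝓝 x) (d : E) :
    (𝓝[>] (0 : ℝ)).IsBoundedUnder (· ≤ ·) fun t => |(f (x + t • d) - f x) / t| :=
  isBoundedUnder_of_eventually_le (hf.eventually_abs_slope_le hU d)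

theorem limsup_slope_sup'_eq_sup'_activeIndices {ι : Type*} [Fintype ι] [Nonempty ι]
    {f : ι → E → ℝ} {x : E} (hf : ∀ i, ∃ K : NNReal, ∃ U ∈ 𝓝 x, LipschitzOnWith K (f i) U)
    (d : E) :
    limsup (fun t : ℝ => (univ.sup' univ_nonempty (f · (x + t • d)) -
        univ.sup' univ_nonempty (f · x)) / t) (𝓝[>] 0) =
      (activeIndices f x).sup' (activeIndices_nonempty f x)
        fun i => limsup (fun t : ℝ => (f i (x + t • d) - f i x) / t) (𝓝[>] 0) := by
  choose K U hU hlip using hf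
  have hbdd i := isBoundedUnder_le_abs.1 ((hlip i).isBoundedUnder_abs_slope (hU i) d)
  have hslope : ∀ᶠ t in 𝓝[>] (0 : ℝ),
      (univ.sup' univ_nonempty (f · (x + t • d)) - univ.sup' univ_nonempty (f · x)) / t =
        (activeIndices f x).sup' (activeIndices_nonempty f x)
          fun i => (f i (x + t • d) - f i x) / t := by
    have hcont i : ContinuousAt (f i) x := (hlip i).continuousOn.continuousAt (hU i)
    filter_upwards [tendsto_add_smul_nhdsGT_zero x d
        (eventually_sup'_eq_sup'_activeIndices hcont), self_mem_nhdsWithin] with t hmax ht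
    rw [hmax, sup'_sub_div _ _ _ ht.le]
    exact sup'_congr _ rfl fun i hi => by rw [mem_activeIndices.1 hi]
  rw [limsup_congr hslope]
  exact limsup_finset_sup' _ (fun i _ => (hbdd i).2.isCoboundedUnder_le) fun i _ => (hbdd i).1

end Slope

/-- for a finite family of functions locally Lipschitz around `xb`,
the upper directional derivative of the pointwise maximum `F = max_i f_i` equals the
maximum of the upper directional derivatives of the active functions
`I_max(xb) = {i : f_i(xb) = F(xb)}`. -/
theorem maxRule_upperDirDeriv_eq {n : ℕ} {I : Type*} [Fintype I] [Nonempty I]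
    (f : I → EuclideanSpace ℝ (Fin n) → ℝ) (xb : EuclideanSpace ℝ (Fin n))
    (hf : ∀ i : I, ∃ K : NNReal, ∃ U ∈ nhds xb, LipschitzOnWith K (f i) U)
    (F : EuclideanSpace ℝ (Fin n) → ℝ)
    (hF : ∀ x, F x = Finset.univ.sup' Finset.univ_nonempty (fun i => f i x))
    (d : EuclideanSpace ℝ (Fin n)) :
    IsGreatest {y : ℝ | ∃ i : I, f i xb = F xb ∧ y = upperDirDeriv (f i) xb d}
      (upperDirDeriv F xb d) := by
  have hmax : upperDirDeriv F xb d = (activeIndices f xb).sup' (activeIndices_nonempty f xb)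
      fun i => upperDirDeriv (f i) xb d := by
    simp only [upperDirDeriv, hF]
    exact limsup_slope_sup'_eq_sup'_activeIndices hf d
  rw [hmax]
  constructor
  · obtain ⟨i, hi, hmax_eq⟩ := exists_mem_eq_sup' (activeIndices_nonempty f xb)
      fun i => upperDirDeriv (f i) xb d
    exact ⟨i, (mem_activeIndices.1 hi).trans (hF xb).symm, hmax_eq⟩
  · rintro y ⟨i, hi, rfl⟩
    exact le_sup' (fun i => upperDirDeriv (f i) xb d) (mem_activeIndices.2 (hi.trans (hF xb)))
end

section
/- Let X ⊆ ℝⁿ be a nonempty closed convex set, let x ∈ X, let w₀, w₁ ∈ ℝⁿ, c ∈ ℝ, p > 0, α > 0, and suppose d* ∈ ℝⁿ with x + d* ∈ X minimizes the subproblem objective θ_{p,α}(d) := (1/p)⟨w₀, d⟩ + max{c + ⟨w₁, d⟩, 0} + (α/2)‖d‖² over the feasible set {d ∈ ℝⁿ : x + d ∈ X}. Then there exists λ ∈ [0,1] such that: (i) λ · min{c + ⟨w₁, d*⟩, 0} = 0 and (1 − λ) · max{c + ⟨w₁, d*⟩, 0} = 0; and (ii) for every u ∈ X, ⟨(1/p)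 w₀ + λ w₁ + α d*, u − (x + d*)⟩ ≥ 0. -/
/-!
Moving from `d*` towards a feasible point `u` by a step `t` and dividing the increase of the
objective by `t` gives, as `t → 0⁺`, the directional inequality
`⟪(1/p) w₀ + α d*, v⟫ + φ'(g; ⟪w₁, v⟫) ≥ 0` for `v = u - (x + d*)`, where `φ = max (·) 0` and
`g = c + ⟪w₁, d*⟫`. For `g > 0` (resp. `g < 0`) the one-sided derivative `φ'(g; s)` is `s`
(resp. `0`), giving `λ = 1` (resp. `λ = 0`). For `g = 0` it is `max s 0`, and a one-dimensional
minimax argument on the convex set of pairs `(⟪(1/p) w₀ + α d*, v⟫, ⟪w₁, v⟫)` produces a single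
`λ ∈ [0, 1]`: by convexity, every lower bound `-q₁ / q₂` (from `q₂ > 0`) lies below every upper
bound `q₁ / (-q₂)` (from `q₂ < 0`).
-/

open Filter Topology Set
open scoped RealInnerProductSpace

lemma tendsto_add_mul_nhdsGT_zero (a k : ℝ) :
    Tendsto (fun t => a + t * k) (𝓝[>] 0) (𝓝 a) := by
  have : Continuous fun t : ℝ => a + t * k := by fun_prop
  simpa using (this.tendsto 0).mono_left nhdsWithin_le_nhds

lemma nonneg_of_eventually_nonneg_add_mul {a k : ℝ}
    (h : ∀ᶠ t in 𝓝[>] 0, 0 ≤ a + t * k) : 0 ≤ a :=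
  ge_of_tendsto (tendsto_add_mul_nhdsGT_zero a k) h

lemma max_add_mul_sub_max_le (g s : ℝ) {t : ℝ} (ht : 0 ≤ t) :
    max (g + t * s) 0 - max g 0 ≤ t * max s 0 := by
  have := mul_le_mul_of_nonneg_left (le_max_left s 0) ht
  have := mul_nonneg ht (le_max_right s 0)
  have := le_max_left g 0
  have := le_max_right g 0
  exact sub_le_iff_le_add.2 (max_le (by linarith) (by linarith))

lemma eventually_max_add_mul_sub_max_of_pos {g : ℝ} (hg : 0 < g) (s : ℝ) :
    ∀ᶠ t in 𝓝[>] 0, max (g + t * s) 0 - max g 0 ≤ t * s := by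
  filter_upwards [(tendsto_add_mul_nhdsGT_zero g s).eventually (lt_mem_nhds hg)] with t ht
  rw [max_eq_left ht.le, max_eq_left hg.le, add_sub_cancel_left]

lemma eventually_max_add_mul_sub_max_of_neg {g : ℝ} (hg : g < 0) (s : ℝ) :
    ∀ᶠ t in 𝓝[>] 0, max (g + t * s) 0 - max g 0 ≤ t * 0 := by
  filter_upwards [(tendsto_add_mul_nhdsGT_zero g s).eventually (gt_mem_nhds hg)] with t ht
  rw [max_eq_right ht.le, max_eq_right hg.le, sub_zero, mul_zero]

lemma Convex.fst_mul_snd_le_of_snd_neg_of_snd_pos {T : Set (ℝ × ℝ)} (hT : Convex ℝ T)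
    (h : ∀ q ∈ T, 0 ≤ q.1 + max q.2 0) {q r : ℝ × ℝ} (hq : q ∈ T) (hr : r ∈ T)
    (hq₂ : q.2 < 0) (hr₂ : 0 < r.2) : r.1 * q.2 ≤ q.1 * r.2 := by
  have hD : 0 < r.2 - q.2 := by linarith
  -- the point of the segment `[q, r]` on the first axis
  have hmem := hT hq hr (div_nonneg hr₂.le hD.le) (div_nonneg (neg_nonneg.2 hq₂.le) hD.le)
    (by field_simp; ring)
  have key := h _ hmem
  simp only [Prod.fst_add, Prod.snd_add, Prod.smul_fst, Prod.smul_snd, smul_eq_mul] at key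
  rw [show r.2 / (r.2 - q.2) * q.2 + -q.2 / (r.2 - q.2) * r.2 = 0 by ring, max_self,
    add_zero, show r.2 / (r.2 - q.2) * q.1 + -q.2 / (r.2 - q.2) * r.1
      = (r.2 * q.1 - q.2 * r.1) / (r.2 - q.2) by ring, le_div_iff₀ hD, zero_mul] at key
  linarith

lemma Convex.exists_mem_Icc_forall_nonneg_add_mul {T : Set (ℝ × ℝ)} (hT : Convex ℝ T)
    (h : ∀ q ∈ T, 0 ≤ q.1 + max q.2 0) :
    ∃ lam ∈ Icc (0 : ℝ) 1, ∀ q ∈ T, 0 ≤ q.1 + lam * q.2 := by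
  set L : Set ℝ := insert 0 ((fun q => -q.1 / q.2) '' {q ∈ T | 0 < q.2})
  set U : Set ℝ := insert 1 ((fun q => q.1 / -q.2) '' {q ∈ T | q.2 < 0})
  have hLU : ∀ l ∈ L, ∀ u ∈ U, l ≤ u := by
    rintro _ (rfl | ⟨r, ⟨hr, hr₂⟩, rfl⟩) _ (rfl | ⟨q, ⟨hq, hq₂⟩, rfl⟩)
    · exact zero_le_one
    · have := h q hq
      rw [max_eq_right hq₂.le, add_zero] at this
      exact div_nonneg this (by linarith)
    · have := h r hr
      rw [max_eq_left hr₂.le] at this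
      rw [div_le_one hr₂]; linarith
    · rw [div_le_div_iff₀ hr₂ (by linarith)]
      linarith [hT.fst_mul_snd_le_of_snd_neg_of_snd_pos h hq hr hq₂ hr₂]
  obtain ⟨lam, hlamL, hlamU⟩ := exists_between_of_forall_le (insert_nonempty _ _)
    (insert_nonempty _ _) hLU
  refine ⟨lam, ⟨hlamL (mem_insert _ _), hlamU (mem_insert _ _)⟩, fun q hq => ?_⟩
  rcases lt_trichotomy q.2 0 with hq₂ | hq₂ | hq₂
  · have := hlamU (mem_insert_of_mem _ ⟨q, ⟨hq, hq₂⟩, rfl⟩)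
    rw [le_div_iff₀ (by linarith)] at this
    linarith
  · simpa [hq₂] using h q hq
  · have := hlamL (mem_insert_of_mem _ ⟨q, ⟨hq, hq₂⟩, rfl⟩)
    rw [div_le_iff₀ hq₂] at this
    linarith

section
variable {E : Type*} [NormedAddCommGroup E] [InnerProductSpace ℝ E]

noncomputable def subproblemObjective (b w : E) (c α : ℝ) (d : E) : ℝ :=
  ⟪b, d⟫ + max (c + ⟪w, d⟫) 0 + α / 2 * ‖d‖ ^ 2

lemma subproblemObjective_add_smul (b w : E) (c α : ℝ) (d v : E) (t : ℝ) :
    subproblemObjective b w c α (d + t • v) = subproblemObjective b w c α d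
      + t * ⟪b + α • d, v⟫ + (max (c + ⟪w, d⟫ + t * ⟪w, v⟫) 0 - max (c + ⟪w, d⟫) 0)
      + t ^ 2 * (α / 2 * ‖v‖ ^ 2) := by
  simp only [subproblemObjective, inner_add_left, inner_add_right, real_inner_smul_left,
    real_inner_smul_right, norm_add_sq_real, norm_smul, Real.norm_eq_abs, mul_pow, sq_abs]
  ring_nf

lemma inner_add_nonneg_of_isMinOn_subproblemObjective {b w : E} {c α : ℝ} {S : Set E}
    {d e : E} (hmin : IsMinOn (subproblemObjective b w c α) S d) (hS : Convex ℝ S)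
    (hd : d ∈ S) (he : e ∈ S) {m : ℝ}
    (hm : ∀ᶠ t in 𝓝[>] 0,
      max (c + ⟪w, d⟫ + t * ⟪w, e - d⟫) 0 - max (c + ⟪w, d⟫) 0 ≤ t * m) :
    0 ≤ ⟪b + α • d, e - d⟫ + m := by
  refine nonneg_of_eventually_nonneg_add_mul (k := α / 2 * ‖e - d‖ ^ 2) ?_
  filter_upwards [hm, Ioc_mem_nhdsGT zero_lt_one] with t hmt ht
  have hle : subproblemObjective b w c α d ≤ subproblemObjective b w c α (d + t • (e - d)) :=
    hmin (hS.add_smul_sub_mem hd he (Ioc_subset_Icc_self ht))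
  rw [subproblemObjective_add_smul] at hle
  refine nonneg_of_mul_nonneg_right ?_ ht.1
  linarith

lemma Convex.image_inner_sub_prod {X : Set E} (hX : Convex ℝ X) (a w z : E) :
    Convex ℝ ((fun u => (⟪a, u - z⟫, ⟪w, u - z⟫)) '' X) := by
  rintro _ ⟨u, hu, rfl⟩ _ ⟨u', hu', rfl⟩ s t hs ht hst
  refine ⟨s • u + t • u', hX hu hu' hs ht hst, ?_⟩
  have : s • u + t • u' - z = s • (u - z) + t • (u' - z) := by
    linear_combination (norm := module) hst • z
  simp [this, inner_add_right, real_inner_smul_right]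

end

theorem subproblem_kkt_general {n : ℕ} (X : Set (EuclideanSpace ℝ (Fin n)))
    (hXconv : Convex ℝ X)
    (x : EuclideanSpace ℝ (Fin n))
    (w₀ w₁ : EuclideanSpace ℝ (Fin n)) (c p α : ℝ)
    (dstar : EuclideanSpace ℝ (Fin n)) (hdX : x + dstar ∈ X)
    (hmin : ∀ d : EuclideanSpace ℝ (Fin n), x + d ∈ X →
      (1 / p) * ⟪w₀, dstar⟫ + max (c + ⟪w₁, dstar⟫) 0 + (α / 2) * ‖dstar‖ ^ 2 ≤
      (1 / p) * ⟪w₀, d⟫ + max (c + ⟪w₁, d⟫) 0 + (α / 2) * ‖d‖ ^ 2) :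
    ∃ lam : ℝ, lam ∈ Set.Icc (0 : ℝ) 1 ∧
      lam * min (c + ⟪w₁, dstar⟫) 0 = 0 ∧
      (1 - lam) * max (c + ⟪w₁, dstar⟫) 0 = 0 ∧
      ∀ u ∈ X, 0 ≤ ⟪(1 / p) • w₀ + lam • w₁ + α • dstar, u - (x + dstar)⟫ := by
  set z := x + dstar
  set a := (1 / p) • w₀ + α • dstar
  have hθ : IsMinOn (subproblemObjective ((1 / p) • w₀) w₁ c α) ((x + ·) ⁻¹' X) dstar :=
    isMinOn_iff.2 fun d hd => by
      simpa only [subproblemObjective, real_inner_smul_left] using hmin d hd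
  have hfo : ∀ u ∈ X, ∀ m, (∀ᶠ t in 𝓝[>] 0, max (c + ⟪w₁, dstar⟫ + t * ⟪w₁, u - z⟫) 0
      - max (c + ⟪w₁, dstar⟫) 0 ≤ t * m) → 0 ≤ ⟪a, u - z⟫ + m := by
    intro u hu m hm
    rw [← sub_sub] at hm ⊢
    exact inner_add_nonneg_of_isMinOn_subproblemObjective hθ
      (hXconv.translate_preimage_right x) hdX (by simpa using hu) hm
  have hVI : ∀ lam : ℝ, (∀ u ∈ X, 0 ≤ ⟪a, u - z⟫ + lam * ⟪w₁, u - z⟫) →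
      ∀ u ∈ X, 0 ≤ ⟪(1 / p) • w₀ + lam • w₁ + α • dstar, u - z⟫ := by
    intro lam h u hu
    rw [add_right_comm, inner_add_left, real_inner_smul_left]
    exact h u hu
  rcases lt_trichotomy (c + ⟪w₁, dstar⟫) 0 with hg | hg | hg
  · refine ⟨0, left_mem_Icc.2 zero_le_one, by simp, by simp [hg.le], hVI 0 fun u hu => ?_⟩
    simpa using hfo u hu 0 (eventually_max_add_mul_sub_max_of_neg hg _)
  · have hpairs : ∀ q ∈ (fun u => (⟪a, u - z⟫, ⟪w₁, u - z⟫)) '' X, 0 ≤ q.1 + max q.2 0 := by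
      rintro _ ⟨u, hu, rfl⟩
      refine hfo u hu _ (eventually_nhdsWithin_of_forall fun t ht => ?_)
      simpa [hg] using max_add_mul_sub_max_le 0 ⟪w₁, u - z⟫ (le_of_lt ht)
    obtain ⟨lam, hlam, hlamT⟩ :=
      (hXconv.image_inner_sub_prod a w₁ z).exists_mem_Icc_forall_nonneg_add_mul hpairs
    exact ⟨lam, hlam, by simp [hg], by simp [hg], hVI lam fun u hu => hlamT _ ⟨u, hu, rfl⟩⟩
  · refine ⟨1, right_mem_Icc.2 zero_le_one, by simp [hg.le], by simp, hVI 1 fun u hu => ?_⟩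
    simpa using hfo u hu _ (eventually_max_add_mul_sub_max_of_pos hg _)

/-- first-order optimality conditions for the strongly convex quadratic
subproblem `min_{d : x + d ∈ X} (1/p)⟨w₀, d⟩ + max{c + ⟨w₁, d⟩, 0} + (α/2)‖d‖²`:
there is a multiplier `λ ∈ [0,1]` with the complementarity conditions
`λ·min{c + ⟨w₁, d*⟩, 0} = 0`, `(1−λ)·max{c + ⟨w₁, d*⟩, 0} = 0`, and the
variational inequality `⟨(1/p)w₀ + λw₁ + αd*, u − (x + d*)⟩ ≥ 0` for all `u ∈ X`. -/
theorem subproblem_kkt {n : ℕ} (X : Set (EuclideanSpace ℝ (Fin n)))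
    (hXne : X.Nonempty) (hXcl : IsClosed X) (hXconv : Convex ℝ X)
    (x : EuclideanSpace ℝ (Fin n)) (hx : x ∈ X)
    (w₀ w₁ : EuclideanSpace ℝ (Fin n)) (c p α : ℝ) (hp : 0 < p) (hα : 0 < α)
    (dstar : EuclideanSpace ℝ (Fin n)) (hdX : x + dstar ∈ X)
    (hmin : ∀ d : EuclideanSpace ℝ (Fin n), x + d ∈ X →
      (1 / p) * ⟪w₀, dstar⟫ + max (c + ⟪w₁, dstar⟫) 0 + (α / 2) * ‖dstar‖ ^ 2 ≤
      (1 / p) * ⟪w₀, d⟫ + max (c + ⟪w₁, d⟫) 0 + (α / 2) * ‖d‖ ^ 2) :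
    ∃ lam : ℝ, lam ∈ Set.Icc (0 : ℝ) 1 ∧
      lam * min (c + ⟪w₁, dstar⟫) 0 = 0 ∧
      (1 - lam) * max (c + ⟪w₁, dstar⟫) 0 = 0 ∧
      ∀ u ∈ X, 0 ≤ ⟪(1 / p) • w₀ + lam • w₁ + α • dstar, u - (x + dstar)⟫ :=
  subproblem_kkt_general X hXconv x w₀ w₁ c p α dstar hdX hmin
end

section
/- Let φ₀, φ₁ : ℝⁿ → ℝ, let m ∈ ℝ, σ > 0, α > 0, and let sequences x_k, d_k ∈ ℝⁿ, τ_k ∈ (0, 1], and p_k > 0 satisfy, for every k ∈ ℕ: p_{k+1} ≥ p_k; φ₀(x_k) ≥ m; x_{k+1} = x_k + τ_k d_k; and (1/p_k) φ₀(x_{k+1}) + max{φ₁(x_{k+1}), 0} ≤ (1/p_k) φ₀(x_k) + max{φ₁(x_k), 0} − σ τ_k α ‖d_k‖². Define A_k := (1/p_k)(φ₀(x_k) − m) + max{φ₁(x_k), 0}. Then for every k one has A_{k+1} ≤ A_k − σ τ_k α ‖d_k‖², and moreover Σ_{k=0}^∞ ‖x_{k+1} − x_k‖² ≤ A₀/(σα);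 in particular the series Σ_k ‖x_{k+1} − x_k‖² converges. -/
/-- monotonic decrease of the merit quantities
`A_k := (1/p_k)(φ₀(x_k) − m) + max{φ₁(x_k), 0}` along the iterates, and the summability
`Σ_k ‖x_{k+1} − x_k‖² ≤ A₀/(σα)`. -/
theorem merit_decrease_and_summable {n : ℕ}
    (φ₀ φ₁ : EuclideanSpace ℝ (Fin n) → ℝ) (m σ α : ℝ) (hσ : 0 < σ) (hα : 0 < α)
    (x d : ℕ → EuclideanSpace ℝ (Fin n)) (τ : ℕ → ℝ) (p : ℕ → ℝ)
    (hτ : ∀ k, τ k ∈ Set.Ioc (0 : ℝ) 1) (hp : ∀ k, 0 < p k)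
    (hpmono : ∀ k, p k ≤ p (k + 1))
    (hlb : ∀ k, m ≤ φ₀ (x k))
    (hupd : ∀ k, x (k + 1) = x k + τ k • d k)
    (hdec : ∀ k, (1 / p k) * φ₀ (x (k + 1)) + max (φ₁ (x (k + 1))) 0 ≤
      (1 / p k) * φ₀ (x k) + max (φ₁ (x k)) 0 - σ * τ k * α * ‖d k‖ ^ 2)
    (A : ℕ → ℝ)
    (hA : ∀ k, A k = (1 / p k) * (φ₀ (x k) - m) + max (φ₁ (x k)) 0) :
    (∀ k, A (k + 1) ≤ A k - σ * τ k * α * ‖d k‖ ^ 2) ∧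
      Summable (fun k => ‖x (k + 1) - x k‖ ^ 2) ∧
      ∑' k, ‖x (k + 1) - x k‖ ^ 2 ≤ A 0 / (σ * α) := by
  have hdecA : ∀ k, A (k + 1) ≤ A k - σ * τ k * α * ‖d k‖ ^ 2 := by
    intro k
    have h1 : 1 / p (k + 1) ≤ 1 / p k :=
      one_div_le_one_div_of_le (hp k) (hpmono k)
    have h2 : (1 / p (k + 1)) * (φ₀ (x (k + 1)) - m) ≤
        (1 / p k) * (φ₀ (x (k + 1)) - m) :=
      mul_le_mul_of_nonneg_right h1 (by linarith [hlb (k + 1)])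
    have h3 := hdec k
    rw [hA, hA]
    have hexp : (1 / p k) * (φ₀ (x (k + 1)) - m) + max (φ₁ (x (k + 1))) 0 ≤
        (1 / p k) * (φ₀ (x k) - m) + max (φ₁ (x k)) 0 - σ * τ k * α * ‖d k‖ ^ 2 := by
      ring_nf
      ring_nf at h3
      linarith
    linarith
  have hAnonneg : ∀ k, 0 ≤ A k := by
    intro k
    rw [hA]
    have := hlb k
    have hpk := hp k
    have : 0 ≤ (1 / p k) * (φ₀ (x k) - m) :=
      mul_nonneg (by positivity) (by linarith)
    have : (0:ℝ) ≤ max (φ₁ (x k)) 0 := le_max_right _ _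
    linarith
  have hstep : ∀ k, σ * α * ‖x (k + 1) - x k‖ ^ 2 ≤ A k - A (k + 1) := by
    intro k
    have hτk := hτ k
    obtain ⟨hτ0, hτ1⟩ := hτk
    have hΔ : ‖x (k + 1) - x k‖ ^ 2 = (τ k) ^ 2 * ‖d k‖ ^ 2 := by
      rw [hupd k]
      simp [norm_smul, abs_of_pos hτ0, mul_pow]
    have hτsq : (τ k) ^ 2 ≤ τ k := by nlinarith
    have hd2 : (0:ℝ) ≤ ‖d k‖ ^ 2 := by positivity
    have h4 : σ * α * ‖d k‖ ^ 2 * (τ k) ^ 2 ≤ σ * α * ‖d k‖ ^ 2 * τ k :=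
      mul_le_mul_of_nonneg_left hτsq (by positivity)
    have : σ * α * ((τ k) ^ 2 * ‖d k‖ ^ 2) ≤ σ * τ k * α * ‖d k‖ ^ 2 := by
      nlinarith [h4]
    have := hdecA k
    rw [hΔ]
    linarith
  have hsum : ∀ N, ∑ k ∈ Finset.range N, σ * α * ‖x (k + 1) - x k‖ ^ 2 ≤ A 0 := by
    intro N
    have htel : ∑ k ∈ Finset.range N, (A k - A (k + 1)) = A 0 - A N := by
      induction N with
      | zero => simp
      | succ N ih => rw [Finset.sum_range_succ, ih]; ring
    calc ∑ k ∈ Finset.range N, σ * α * ‖x (k + 1) - x k‖ ^ 2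
        ≤ ∑ k ∈ Finset.range N, (A k - A (k + 1)) :=
          Finset.sum_le_sum fun k _ => hstep k
      _ = A 0 - A N := htel
      _ ≤ A 0 := by linarith [hAnonneg N]
  have hσα : 0 < σ * α := mul_pos hσ hα
  have hbound : ∀ N, ∑ k ∈ Finset.range N, ‖x (k + 1) - x k‖ ^ 2 ≤ A 0 / (σ * α) := by
    intro N
    rw [le_div_iff₀ hσα]
    calc (∑ k ∈ Finset.range N, ‖x (k + 1) - x k‖ ^ 2) * (σ * α)
        = ∑ k ∈ Finset.range N, σ * α * ‖x (k + 1) - x k‖ ^ 2 := by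
          rw [Finset.sum_mul]; exact Finset.sum_congr rfl fun k _ => by ring
      _ ≤ A 0 := hsum N
  have hsummable : Summable (fun k => ‖x (k + 1) - x k‖ ^ 2) :=
    summable_of_sum_range_le (fun k => by positivity) hbound
  exact ⟨hdecA, hsummable, Summable.tsum_le_of_sum_range_le hsummable hbound⟩
end

section
/- Let x, d ∈ ℝⁿ, t ∈ (0, 1], let g₁, h₁ : ℝⁿ → ℝ, u₁, v₁ ∈ ℝⁿ, and r_g, r_h ≥ 0 satisfy g₁(x + t d) ≤ g₁(x) + t⟨u₁, d⟩ + (r_g/2) t² ‖d‖² and h₁(x + t d) ≥ h₁(x) + t⟨v₁, d⟩ − (r_h/2) t² ‖d‖². Let a := (g₁(x) − h₁(x)) + ⟨u₁ − v₁, d⟩ and let λ ∈ [0,1] satisfy λ · min{a, 0} = 0 and (1 − λ) · max{a, 0} = 0. Then max{g₁(x + t d) − h₁(x + t d), 0} ≤ max{g₁(x) − h₁(x), 0} + t λ ⟨u₁ − v₁, d⟩ + ((r_g + r_h)/2) t² ‖d‖². -/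
open scoped RealInnerProductSpace

private lemma maxTerm_aux (s c a t lam : ℝ) (ha : a = s + c) (ht0 : 0 < t) (ht1 : t ≤ 1)
    (hl0 : 0 ≤ lam) (hl1 : lam ≤ 1) (hla : lam * a = max a 0) :
    max (s + t * c) 0 ≤ max s 0 + t * lam * c := by
  subst ha
  have hms := le_max_left s 0
  have hms0 := le_max_right s 0
  have h3 := le_max_left (s + c) 0
  have h4 := le_max_right (s + c) 0
  rw [← hla] at h3 h4
  have hls : lam * s ≤ max s 0 := by
    rcases le_total s 0 with h | h
    · rw [max_eq_right h]; nlinarith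
    · rw [max_eq_left h]; nlinarith
  refine max_le ?_ ?_
  · nlinarith [mul_le_mul_of_nonneg_left hms (by linarith : (0:ℝ) ≤ 1 - t),
      mul_le_mul_of_nonneg_left hls ht0.le, mul_le_mul_of_nonneg_left h3 ht0.le]
  · nlinarith [mul_le_mul_of_nonneg_left hls ht0.le,
      mul_le_mul_of_nonneg_left h4 ht0.le,
      mul_le_mul_of_nonneg_left hms (by linarith : (0:ℝ) ≤ 1 - t)]

/-- decrease estimate for the constraint term `max{g₁ − h₁, 0}` along the
segment from `x` to `x + t d`, using quadratic upper/lower estimates of `g₁`, `h₁` and a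
multiplier `λ ∈ [0,1]` associated with `a := (g₁(x) − h₁(x)) + ⟨u₁ − v₁, d⟩`. -/
theorem maxTerm_decrease {n : ℕ} (x d : EuclideanSpace ℝ (Fin n))
    (t : ℝ) (ht : t ∈ Set.Ioc (0 : ℝ) 1)
    (g₁ h₁ : EuclideanSpace ℝ (Fin n) → ℝ) (u₁ v₁ : EuclideanSpace ℝ (Fin n))
    (r_g r_h : ℝ) (hrg : 0 ≤ r_g) (hrh : 0 ≤ r_h)
    (hg : g₁ (x + t • d) ≤ g₁ x + t * ⟪u₁, d⟫ + (r_g / 2) * t ^ 2 * ‖d‖ ^ 2)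
    (hh : h₁ x + t * ⟪v₁, d⟫ - (r_h / 2) * t ^ 2 * ‖d‖ ^ 2 ≤ h₁ (x + t • d))
    (a : ℝ) (ha : a = (g₁ x - h₁ x) + ⟪u₁ - v₁, d⟫)
    (lam : ℝ) (hlam : lam ∈ Set.Icc (0 : ℝ) 1)
    (h1 : lam * min a 0 = 0) (h2 : (1 - lam) * max a 0 = 0) :
    max (g₁ (x + t • d) - h₁ (x + t • d)) 0 ≤
      max (g₁ x - h₁ x) 0 + t * lam * ⟪u₁ - v₁, d⟫ +
        ((r_g + r_h) / 2) * t ^ 2 * ‖d‖ ^ 2 := by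
  obtain ⟨ht0, ht1⟩ := ht
  obtain ⟨hl0, hl1⟩ := hlam
  have hc : (⟪u₁ - v₁, d⟫ : ℝ) = ⟪u₁, d⟫ - ⟪v₁, d⟫ := inner_sub_left _ _ _
  rw [hc] at ha ⊢
  set s : ℝ := g₁ x - h₁ x with hs
  set c : ℝ := (⟪u₁, d⟫ - ⟪v₁, d⟫ : ℝ) with hcdef
  set R : ℝ := ((r_g + r_h) / 2) * t ^ 2 * ‖d‖ ^ 2 with hRdef
  have hR : 0 ≤ R := by positivity
  have hla : lam * a = max a 0 := by
    rcases le_or_gt a 0 with h | h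
    · rw [min_eq_left h] at h1
      rw [max_eq_right h]; exact h1
    · rw [max_eq_left h.le] at h2 ⊢
      nlinarith
  have key : g₁ (x + t • d) - h₁ (x + t • d) ≤ s + t * c + R := by
    simp only [hs, hcdef, hRdef]; nlinarith [hg, hh]
  have step1 : max (g₁ (x + t • d) - h₁ (x + t • d)) 0 ≤ max (s + t * c + R) 0 :=
    max_le_max key le_rfl
  have step2 : max (s + t * c + R) 0 ≤ max (s + t * c) 0 + R :=
    max_le (by linarith [le_max_left (s + t * c) 0]) (by linarith [le_max_right (s + t * c) 0])
  have step3 : max (s + t * c) 0 ≤ max s 0 + t * lam * c :=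
    maxTerm_aux s c a t lam ha ht0 ht1 hl0 hl1 hla
  calc max (g₁ (x + t • d) - h₁ (x + t • d)) 0
      ≤ max (s + t * c) 0 + R := le_trans step1 step2
    _ ≤ max s 0 + t * lam * c + R := by linarith
end

section
/- Let x, d ∈ ℝⁿ, t ∈ (0, 1], p > 0, α > 0, let g₀, h₀, g₁, h₁ : ℝⁿ → ℝ, u₀, v₀, u₁, v₁ ∈ ℝⁿ, and r_{g₀}, r_{h₀}, r_{g₁}, r_{h₁} ≥ 0 satisfy, for i = 0, 1: g_i(x + t d) ≤ g_i(x) + t⟨u_i, d⟩ + (r_{g_i}/2) t² ‖d‖² and h_i(x + t d) ≥ h_i(x) + t⟨v_i, d⟩ − (r_{h_i}/2) t² ‖d‖². Let a := (g₁(x) − h₁(x)) + ⟨u₁ − v₁, d⟩, let λ ∈ [0,1] satisfy λ · min{a, 0} = 0 and (1 − λ) · max{a, 0} = 0, and suppose (1/p)⟨u₀ − v₀, d⟩ + λ⟨u₁ − v₁, d⟩ ≤ −α‖d‖². Then φ_p(x + t d) ≤ φ_p(x) + ( ((r_{g₀} + r_{h₀})/p + r_{g₁} + r_{h₁})/2 ·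 t − α ) · t ‖d‖². -/
open scoped RealInnerProductSpace

lemma key_max (c s t lam : ℝ) (ht0 : 0 < t) (ht1 : t ≤ 1) (hl0 : 0 ≤ lam) (hl1 : lam ≤ 1)
    (h1 : lam * min (c + s) 0 = 0) (h2 : (1 - lam) * max (c + s) 0 = 0) :
    max (c + t * s) 0 ≤ max c 0 + t * lam * s := by
  rcases lt_trichotomy (c + s) 0 with ha | ha | ha
  · have hl : lam = 0 := by
      have : min (c + s) 0 = c + s := min_eq_left ha.le
      rw [this] at h1
      rcases mul_eq_zero.1 h1 with h | h
      · exact h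
      · linarith
    subst hl
    rcases le_total c 0 with hc | hc
    · rw [max_eq_right hc]; apply max_le <;> nlinarith
    · rw [max_eq_left hc]; apply max_le <;> nlinarith
  · have hs : s = -c := by linarith
    subst hs
    rcases le_total c 0 with hc | hc
    · rw [max_eq_right hc]
      apply max_le <;>
        nlinarith [mul_nonneg (mul_nonneg ht0.le hl0) (neg_nonneg.2 hc),
          mul_nonneg (sub_nonneg.2 ht1) (neg_nonneg.2 hc)]
    · rw [max_eq_left hc]
      apply max_le <;>
        nlinarith [mul_nonneg (mul_nonneg ht0.le (sub_nonneg.2 hl1)) hc,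
          mul_nonneg (sub_nonneg.2 hl1) hc,
          mul_nonneg (mul_nonneg hl0 (sub_nonneg.2 ht1)) hc]
  · have hl : lam = 1 := by
      have : max (c + s) 0 = c + s := max_eq_left ha.le
      rw [this] at h2
      rcases mul_eq_zero.1 h2 with h | h
      · linarith
      · linarith
    subst hl
    rcases le_total c 0 with hc | hc
    · rw [max_eq_right hc]; apply max_le <;> nlinarith
    · rw [max_eq_left hc]; apply max_le <;> nlinarith


/-- decrease estimate for the penalty function
`φ_p(x) := (1/p)(g₀(x) − h₀(x)) + max{g₁(x) − h₁(x), 0}` along the segment from `x` to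
`x + t d`, under quadratic estimates for `g_i`, `h_i`, a multiplier `λ` for the
constraint term, and the descent inequality
`(1/p)⟨u₀ − v₀, d⟩ + λ⟨u₁ − v₁, d⟩ ≤ −α‖d‖²`. -/
theorem penalty_decrease {n : ℕ} (x d : EuclideanSpace ℝ (Fin n))
    (t : ℝ) (ht : t ∈ Set.Ioc (0 : ℝ) 1) (p α : ℝ) (hp : 0 < p) (hα : 0 < α)
    (g₀ h₀ g₁ h₁ : EuclideanSpace ℝ (Fin n) → ℝ)
    (u₀ v₀ u₁ v₁ : EuclideanSpace ℝ (Fin n))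
    (r_g0 r_h0 r_g1 r_h1 : ℝ)
    (hrg0 : 0 ≤ r_g0) (hrh0 : 0 ≤ r_h0) (hrg1 : 0 ≤ r_g1) (hrh1 : 0 ≤ r_h1)
    (hg0 : g₀ (x + t • d) ≤ g₀ x + t * ⟪u₀, d⟫ + (r_g0 / 2) * t ^ 2 * ‖d‖ ^ 2)
    (hh0 : h₀ x + t * ⟪v₀, d⟫ - (r_h0 / 2) * t ^ 2 * ‖d‖ ^ 2 ≤ h₀ (x + t • d))
    (hg1 : g₁ (x + t • d) ≤ g₁ x + t * ⟪u₁, d⟫ + (r_g1 / 2) * t ^ 2 * ‖d‖ ^ 2)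
    (hh1 : h₁ x + t * ⟪v₁, d⟫ - (r_h1 / 2) * t ^ 2 * ‖d‖ ^ 2 ≤ h₁ (x + t • d))
    (a : ℝ) (ha : a = (g₁ x - h₁ x) + ⟪u₁ - v₁, d⟫)
    (lam : ℝ) (hlam : lam ∈ Set.Icc (0 : ℝ) 1)
    (h1 : lam * min a 0 = 0) (h2 : (1 - lam) * max a 0 = 0)
    (hdesc : (1 / p) * ⟪u₀ - v₀, d⟫ + lam * ⟪u₁ - v₁, d⟫ ≤ -α * ‖d‖ ^ 2) :
    (1 / p) * (g₀ (x + t • d) - h₀ (x + t • d)) + max (g₁ (x + t • d) - h₁ (x + t • d)) 0 ≤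
      (1 / p) * (g₀ x - h₀ x) + max (g₁ x - h₁ x) 0 +
        (((r_g0 + r_h0) / p + r_g1 + r_h1) / 2 * t - α) * t * ‖d‖ ^ 2 := by
  obtain ⟨ht0, ht1⟩ := ht
  obtain ⟨hl0, hl1⟩ := hlam
  have hkey : max ((g₁ x - h₁ x) + t * ⟪u₁ - v₁, d⟫) 0 ≤
      max (g₁ x - h₁ x) 0 + t * lam * ⟪u₁ - v₁, d⟫ := by
    apply key_max _ _ _ _ ht0 ht1 hl0 hl1
    · rwa [ha] at h1
    · rwa [ha] at h2
  have hmax1 : max (g₁ (x + t • d) - h₁ (x + t • d)) 0 ≤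
      max ((g₁ x - h₁ x) + t * ⟪u₁ - v₁, d⟫ + (r_g1 + r_h1) / 2 * t ^ 2 * ‖d‖ ^ 2) 0 := by
    apply max_le_max _ le_rfl
    rw [inner_sub_left]
    linarith
  have hR : 0 ≤ (r_g1 + r_h1) / 2 * t ^ 2 * ‖d‖ ^ 2 := by positivity
  have hmax2 : max ((g₁ x - h₁ x) + t * ⟪u₁ - v₁, d⟫ + (r_g1 + r_h1) / 2 * t ^ 2 * ‖d‖ ^ 2) 0 ≤
      max ((g₁ x - h₁ x) + t * ⟪u₁ - v₁, d⟫) 0 + (r_g1 + r_h1) / 2 * t ^ 2 * ‖d‖ ^ 2 := by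
    apply max_le
    · linarith [le_max_left ((g₁ x - h₁ x) + t * ⟪u₁ - v₁, d⟫) 0]
    · linarith [le_max_right ((g₁ x - h₁ x) + t * ⟪u₁ - v₁, d⟫) 0]
  have hp' : 0 < 1 / p := by positivity
  have h0 : (1 / p) * (g₀ (x + t • d) - h₀ (x + t • d)) ≤
      (1 / p) * ((g₀ x - h₀ x) + t * ⟪u₀ - v₀, d⟫ + (r_g0 + r_h0) / 2 * t ^ 2 * ‖d‖ ^ 2) := by
    apply mul_le_mul_of_nonneg_left _ hp'.le
    rw [inner_sub_left]
    linarith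
  have hdt : t * ((1 / p) * ⟪u₀ - v₀, d⟫ + lam * ⟪u₁ - v₁, d⟫) ≤ t * (-α * ‖d‖ ^ 2) :=
    mul_le_mul_of_nonneg_left hdesc ht0.le
  have hfield : (1 / p) * ((r_g0 + r_h0) / 2 * t ^ 2 * ‖d‖ ^ 2) +
      (r_g1 + r_h1) / 2 * t ^ 2 * ‖d‖ ^ 2 + t * (-α * ‖d‖ ^ 2) =
      (((r_g0 + r_h0) / p + r_g1 + r_h1) / 2 * t - α) * t * ‖d‖ ^ 2 := by
    field_simp
    ring
  linarith [hkey, hmax1, hmax2, h0, hdt, hfield]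
end

section
/- Let c_p > 0, let g₁ : ℝⁿ → ℝ be continuously differentiable, let h₁ : ℝⁿ → ℝ be continuous, and let sequences x_j, d_j, v_j ∈ ℝⁿ satisfy: x_j → x̄, d_j → 0, the sequence {v_j} is bounded, and for every j, max{ g₁(x_j) − h₁(x_j) + ⟨∇g₁(x_j) − v_j, d_j⟩, 0 } < c_p ‖d_j‖. Then g₁(x̄) − h₁(x̄) ≤ 0. -/
/-! The correction term `⟪∇g₁(x_j) - v_j, d_j⟫` pairs a bounded sequence (the gradients converge
by continuity of `∇g₁`) with one tending to `0`, so it vanishes in the limit; passing to the limit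
in `g₁(x_j) - h₁(x_j) + ⟪…⟫ < c_p ‖d_j‖` then gives `g₁ x̄ - h₁ x̄ ≤ 0`. -/

open Filter
open scoped RealInnerProductSpace Topology

theorem ContDiff.continuous_gradient {𝕜 F : Type*} [RCLike 𝕜] [NormedAddCommGroup F]
    [InnerProductSpace 𝕜 F] [CompleteSpace F] {f : F → 𝕜} {n : WithTop ℕ∞}
    (hf : ContDiff 𝕜 n f) (hn : n ≠ 0) : Continuous (gradient f) :=
  (InnerProductSpace.toDual 𝕜 F).symm.continuous.comp (hf.continuous_fderiv hn)

theorem Filter.isBoundedUnder_le_inner_tendsto_zero {ι 𝕜 F : Type*} [RCLike 𝕜]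
    [NormedAddCommGroup F] [InnerProductSpace 𝕜 F] {l : Filter ι} {u w : ι → F}
    (hu : IsBoundedUnder (· ≤ ·) l (‖u ·‖)) (hw : Tendsto w l (𝓝 0)) :
    Tendsto (fun i => inner 𝕜 (u i) (w i)) l (𝓝 0) :=
  squeeze_zero_norm (fun i => norm_inner_le_norm (u i) (w i))
    (isBoundedUnder_le_mul_tendsto_zero (by simpa only [Function.comp_def, norm_norm] using hu)
      (tendsto_zero_iff_norm_tendsto_zero.mp hw))

theorem feasibility_of_limit_general {n : ℕ} (c_p : ℝ)
    (g₁ h₁ : EuclideanSpace ℝ (Fin n) → ℝ)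
    (hg : ContDiff ℝ 1 g₁) (hh : Continuous h₁)
    (x d v : ℕ → EuclideanSpace ℝ (Fin n)) (xb : EuclideanSpace ℝ (Fin n))
    (hx : Tendsto x atTop (𝓝 xb)) (hd : Tendsto d atTop (𝓝 0))
    (hv : ∃ M : ℝ, ∀ j, ‖v j‖ ≤ M)
    (hineq : ∀ j,
      max (g₁ (x j) - h₁ (x j) + ⟪gradient g₁ (x j) - v j, d j⟫) 0 < c_p * ‖d j‖) :
    g₁ xb - h₁ xb ≤ 0 := by
  have hgrad : Tendsto (fun j => gradient g₁ (x j)) atTop (𝓝 (gradient g₁ xb)) :=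
    ((hg.continuous_gradient one_ne_zero).tendsto xb).comp hx
  have hinner : Tendsto (fun j => ⟪gradient g₁ (x j) - v j, d j⟫) atTop (𝓝 0) := by
    simpa only [inner_sub_left, sub_zero] using
      (isBoundedUnder_le_inner_tendsto_zero (𝕜 := ℝ) hgrad.norm.isBoundedUnder_le hd).sub
        (isBoundedUnder_le_inner_tendsto_zero (isBoundedUnder_of hv) hd)
  have hlhs : Tendsto (fun j => g₁ (x j) - h₁ (x j) + ⟪gradient g₁ (x j) - v j, d j⟫)
      atTop (𝓝 (g₁ xb - h₁ xb + 0)) :=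
    (((hg.continuous.tendsto xb).comp hx).sub ((hh.tendsto xb).comp hx)).add hinner
  have hrhs : Tendsto (fun j => c_p * ‖d j‖) atTop (𝓝 0) := by
    simpa using hd.norm.const_mul c_p
  simpa using le_of_tendsto_of_tendsto' hlhs hrhs fun j =>
    ((le_max_left _ _).trans_lt (hineq j)).le

/-- feasibility of accumulation points. If `x_j → x̄`, `d_j → 0`, the
subgradients `v_j` are bounded, and the constraint-violation measure satisfies
`max{g₁(x_j) − h₁(x_j) + ⟨∇g₁(x_j) − v_j, d_j⟩, 0} < c_p ‖d_j‖` for all `j`, then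
`g₁(x̄) − h₁(x̄) ≤ 0`. -/
theorem feasibility_of_limit {n : ℕ} (c_p : ℝ) (hc : 0 < c_p)
    (g₁ h₁ : EuclideanSpace ℝ (Fin n) → ℝ)
    (hg : ContDiff ℝ 1 g₁) (hh : Continuous h₁)
    (x d v : ℕ → EuclideanSpace ℝ (Fin n)) (xb : EuclideanSpace ℝ (Fin n))
    (hx : Tendsto x atTop (𝓝 xb)) (hd : Tendsto d atTop (𝓝 0))
    (hv : ∃ M : ℝ, ∀ j, ‖v j‖ ≤ M)
    (hineq : ∀ j,
      max (g₁ (x j) - h₁ (x j) + ⟪gradient g₁ (x j) - v j, d j⟫) 0 < c_p * ‖d j‖) :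
    g₁ xb - h₁ xb ≤ 0 :=
  feasibility_of_limit_general c_p g₁ h₁ hg hh x d v xb hx hd hv hineq
end

section
/- Let s ∈ ℕ and let ζ_i : ℝ^{m₁} × ℝ^{m₂} → ℝ, i = 1,…,s, be convex and continuous; define Γ(y) := {z ∈ ℝ^{m₂} : ζ_i(y,z) ≤ 0 for all i}. Let F : ℝ^{m₁} × ℝ^{m₂} → ℝ^{m₂} be continuous, let γ > 0, and let U ⊆ ℝ^{m₁} be an open set with Γ(y) ≠ ∅ for every y ∈ U. Let θ* : U × ℝ^{m₂} → ℝ^{m₂} be any map such that for all (y,z) ∈ U × ℝ^{m₂}, θ*(y,z) ∈ Γ(y) and ⟨F(y,z), θ*(y,z)⟩ + (1/(2γ))‖θ*(y,z) − z‖² ≤ ⟨F(y,z), θ⟩ + (1/(2γ))‖θ − z‖² for every θ ∈ Γ(y). Then θ* is locally bounded around every point of U × ℝ^{m₂}: for every (ȳ, z̄) ∈ U × ℝ^{m₂} there exist δ > 0 and M > 0 such that ‖θ*(y,z)‖ ≤ M whenever (y,z) ∈ U × ℝ^{m₂} and ‖(y,z) − (ȳ,z̄)‖ ≤ δ. -/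
open scoped RealInnerProductSpace

private lemma aux_quad_bound {a b t : ℝ} (ha : 0 ≤ a) (hb : 0 ≤ b) (ht : 0 ≤ t)
    (h : t ^ 2 ≤ a * t + b) : t ≤ a + b + 1 := by
  by_contra hcontra
  push_neg at hcontra
  have ht1 : 1 < t := by linarith
  nlinarith [mul_lt_mul_of_pos_left hcontra (by linarith : (0:ℝ) < t)]

/-- local boundedness of the regularized-gap minimizer map `θ*`.
Here `Γ(y) := {z : ζ_i(y,z) ≤ 0 ∀ i}` with `ζ_i` jointly convex and continuous,
`Γ(y) ≠ ∅` on the open set `U`, and `θ*(y,z)` minimizes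
`θ ↦ ⟨F(y,z), θ⟩ + (1/(2γ))‖θ − z‖²` over `Γ(y)`. -/
theorem gap_minimizer_locally_bounded {m₁ m₂ s : ℕ}
    (ζ : Fin s → EuclideanSpace ℝ (Fin m₁) × EuclideanSpace ℝ (Fin m₂) → ℝ)
    (hζconv : ∀ i, ConvexOn ℝ Set.univ (ζ i))
    (hζcont : ∀ i, Continuous (ζ i))
    (Γ : EuclideanSpace ℝ (Fin m₁) → Set (EuclideanSpace ℝ (Fin m₂)))
    (hΓ : ∀ y, Γ y = {z | ∀ i, ζ i (y, z) ≤ 0})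
    (F : EuclideanSpace ℝ (Fin m₁) × EuclideanSpace ℝ (Fin m₂) →
      EuclideanSpace ℝ (Fin m₂))
    (hF : Continuous F) (γ : ℝ) (hγ : 0 < γ)
    (U : Set (EuclideanSpace ℝ (Fin m₁))) (hU : IsOpen U)
    (hΓne : ∀ y ∈ U, (Γ y).Nonempty)
    (θs : EuclideanSpace ℝ (Fin m₁) × EuclideanSpace ℝ (Fin m₂) →
      EuclideanSpace ℝ (Fin m₂))
    (hθmem : ∀ y ∈ U, ∀ z, θs (y, z) ∈ Γ y)
    (hθmin : ∀ y ∈ U, ∀ z, ∀ θ ∈ Γ y,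
      ⟪F (y, z), θs (y, z)⟫ + (1 / (2 * γ)) * ‖θs (y, z) - z‖ ^ 2 ≤
      ⟪F (y, z), θ⟫ + (1 / (2 * γ)) * ‖θ - z‖ ^ 2)
    (yb : EuclideanSpace ℝ (Fin m₁)) (zb : EuclideanSpace ℝ (Fin m₂)) (hyb : yb ∈ U) :
    ∃ δ > (0 : ℝ), ∃ M > (0 : ℝ), ∀ y ∈ U, ∀ z : EuclideanSpace ℝ (Fin m₂),
      ‖((y, z) : EuclideanSpace ℝ (Fin m₁) × EuclideanSpace ℝ (Fin m₂)) - (yb, zb)‖ ≤ δ →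
      ‖θs (y, z)‖ ≤ M := by
  classical
  -- a ball around yb inside U
  obtain ⟨ρ, hρpos, hballU⟩ := Metric.isOpen_iff.mp hU yb hyb
  -- the graph constraint is convex: convex combinations stay in Γ
  have hΓconv : ∀ (y₁ y₂ : EuclideanSpace ℝ (Fin m₁))
      (z₁ z₂ : EuclideanSpace ℝ (Fin m₂)) (a b : ℝ), 0 ≤ a → 0 ≤ b → a + b = 1 →
      z₁ ∈ Γ y₁ → z₂ ∈ Γ y₂ → a • z₁ + b • z₂ ∈ Γ (a • y₁ + b • y₂) := by
    intro y₁ y₂ z₁ z₂ a b ha hb hab hz₁ hz₂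
    rw [hΓ] at hz₁ hz₂ ⊢
    intro i
    have h := (hζconv i).2 (Set.mem_univ (y₁, z₁)) (Set.mem_univ (y₂, z₂)) ha hb hab
    have heq : (a • (y₁, z₁) + b • (y₂, z₂) :
        EuclideanSpace ℝ (Fin m₁) × EuclideanSpace ℝ (Fin m₂)) =
        (a • y₁ + b • y₂, a • z₁ + b • z₂) := rfl
    rw [heq] at h
    have h1 := hz₁ i
    have h2 := hz₂ i
    simp only [smul_eq_mul] at h
    nlinarith [mul_nonneg ha (neg_nonneg.mpr h1), mul_nonneg hb (neg_nonneg.mpr h2)]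
  -- the infimal norm function
  set h : EuclideanSpace ℝ (Fin m₁) → ℝ := fun y => sInf (norm '' Γ y) with hh
  have hbdd : ∀ y, BddBelow (norm '' Γ y) := by
    intro y
    refine ⟨0, ?_⟩
    rintro r ⟨w, _, rfl⟩
    positivity
  have hne : ∀ y ∈ U, (norm '' Γ y).Nonempty := fun y hy => (hΓne y hy).image _
  have hsel : ∀ y ∈ U, ∀ ε : ℝ, 0 < ε → ∃ w ∈ Γ y, ‖w‖ < h y + ε := by
    intro y hy ε hε
    obtain ⟨r, ⟨w, hw, rfl⟩, hr⟩ := Real.lt_sInf_add_pos (hne y hy) hε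
    exact ⟨w, hw, hr⟩
  have hh0 : ∀ y, 0 ≤ h y := by
    intro y
    apply Real.sInf_nonneg
    rintro r ⟨w, _, rfl⟩
    positivity
  -- h is convex on the ball
  have hconv : ConvexOn ℝ (Metric.ball yb ρ) h := by
    refine ⟨convex_ball _ _, ?_⟩
    intro x hx y hy a b ha hb hab
    simp only [smul_eq_mul]
    refine le_of_forall_pos_le_add ?_
    intro ε hε
    obtain ⟨w₁, hw₁, hn₁⟩ := hsel x (hballU hx) ε hε
    obtain ⟨w₂, hw₂, hn₂⟩ := hsel y (hballU hy) ε hε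
    have hmem := hΓconv x y w₁ w₂ a b ha hb hab hw₁ hw₂
    have hle : h (a • x + b • y) ≤ ‖a • w₁ + b • w₂‖ :=
      csInf_le (hbdd _) ⟨_, hmem, rfl⟩
    have hns : ‖a • w₁ + b • w₂‖ ≤ a * ‖w₁‖ + b * ‖w₂‖ := by
      calc ‖a • w₁ + b • w₂‖ ≤ ‖a • w₁‖ + ‖b • w₂‖ := norm_add_le _ _
        _ = |a| * ‖w₁‖ + |b| * ‖w₂‖ := by rw [norm_smul, norm_smul]; rfl
        _ = a * ‖w₁‖ + b * ‖w₂‖ := by rw [abs_of_nonneg ha, abs_of_nonneg hb]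
    have h1 : a * ‖w₁‖ ≤ a * (h x + ε) := by
      apply mul_le_mul_of_nonneg_left hn₁.le ha
    have h2 : b * ‖w₂‖ ≤ b * (h y + ε) := by
      apply mul_le_mul_of_nonneg_left hn₂.le hb
    have : a * (h x + ε) + b * (h y + ε) = a * h x + b * h y + ε := by ring_nf; nlinarith [hab]
    linarith
  -- h is continuous on the ball, hence locally bounded at yb
  have hcont : ContinuousOn h (Metric.ball yb ρ) :=
    hconv.continuousOn Metric.isOpen_ball
  have hcw : ContinuousWithinAt h (Metric.ball yb ρ) yb :=
    hcont yb (Metric.mem_ball_self hρpos)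
  have htend : Filter.Tendsto h (nhds yb) (nhds (h yb)) := by
    have := hcw.tendsto
    rwa [Metric.isOpen_ball.nhdsWithin_eq (Metric.mem_ball_self hρpos)] at this
  have hev : ∀ᶠ y in nhds yb, h y < h yb + 1 :=
    htend.eventually (Filter.Tendsto.eventually_lt_const (by linarith) Filter.tendsto_id)
  obtain ⟨δ₁, hδ₁pos, hδ₁⟩ := Metric.eventually_nhds_iff.mp hev
  -- bound on F near (yb,zb)
  obtain ⟨C, hC⟩ := (isCompact_closedBall
    ((yb, zb) : EuclideanSpace ℝ (Fin m₁) × EuclideanSpace ℝ (Fin m₂)) 1).exists_bound_of_continuousOn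
    hF.continuousOn
  set CF : ℝ := max C 0 with hCF
  have hCF0 : 0 ≤ CF := le_max_right _ _
  set B : ℝ := h yb + 2 with hB
  have hB0 : 2 ≤ B := by have := hh0 yb; linarith
  set Z : ℝ := ‖zb‖ + 1 with hZ
  have hZ0 : 1 ≤ Z := by have : (0:ℝ) ≤ ‖zb‖ := norm_nonneg _; linarith
  set a : ℝ := 2 * γ * CF with haa
  set bb : ℝ := 2 * γ * CF * (B + Z) + (B + Z) ^ 2 with hbb
  have ha0 : 0 ≤ a := by positivity
  have hbb0 : 0 ≤ bb := by positivity
  refine ⟨min (δ₁ / 2) 1, by positivity, a + bb + 1 + Z, by positivity, ?_⟩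
  intro y hy z hyz
  -- extract the componentwise bounds
  have hsub : ((y, z) : EuclideanSpace ℝ (Fin m₁) × EuclideanSpace ℝ (Fin m₂)) - (yb, zb)
      = (y - yb, z - zb) := rfl
  rw [hsub, Prod.norm_def] at hyz
  have hy1 : ‖y - yb‖ ≤ min (δ₁ / 2) 1 := le_trans (le_max_left _ _) hyz
  have hz1 : ‖z - zb‖ ≤ min (δ₁ / 2) 1 := le_trans (le_max_right _ _) hyz
  have hydist : dist y yb < δ₁ := by
    rw [dist_eq_norm]
    calc ‖y - yb‖ ≤ δ₁ / 2 := le_trans hy1 (min_le_left _ _)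
      _ < δ₁ := by linarith
  have hzZ : ‖z‖ ≤ Z := by
    have : ‖z‖ ≤ ‖z - zb‖ + ‖zb‖ := by
      calc ‖z‖ = ‖z - zb + zb‖ := by rw [sub_add_cancel]
        _ ≤ ‖z - zb‖ + ‖zb‖ := norm_add_le _ _
    have h1 : ‖z - zb‖ ≤ 1 := le_trans hz1 (min_le_right _ _)
    rw [hZ]; linarith
  -- (y,z) is in the closed ball of radius 1
  have hmemK : ((y, z) : EuclideanSpace ℝ (Fin m₁) × EuclideanSpace ℝ (Fin m₂)) ∈
      Metric.closedBall ((yb, zb) : EuclideanSpace ℝ (Fin m₁) × EuclideanSpace ℝ (Fin m₂)) 1 := by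
    rw [Metric.mem_closedBall, dist_eq_norm, hsub, Prod.norm_def]
    exact le_trans hyz (min_le_right _ _)
  have hFb : ‖F (y, z)‖ ≤ CF := le_trans (hC _ hmemK) (le_max_left _ _)
  -- select a feasible point of small norm
  obtain ⟨w, hwΓ, hwn⟩ := hsel y hy 1 one_pos
  have hwB : ‖w‖ ≤ B := by
    have := hδ₁ hydist
    rw [hB]; linarith
  -- the minimality inequality
  have key := hθmin y hy z w hwΓ
  set θ := θs (y, z) with hθ
  set t : ℝ := ‖θ - z‖ with ht
  have ht0 : 0 ≤ t := norm_nonneg _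
  have hθn : ‖θ‖ ≤ t + Z := by
    calc ‖θ‖ = ‖θ - z + z‖ := by rw [sub_add_cancel]
      _ ≤ ‖θ - z‖ + ‖z‖ := norm_add_le _ _
      _ ≤ t + Z := by rw [ht]; linarith
  -- Cauchy–Schwarz bound
  have hCS : ⟪F (y, z), w⟫ - ⟪F (y, z), θ⟫ ≤ CF * (B + (t + Z)) := by
    have h1 : ⟪F (y, z), w⟫ - ⟪F (y, z), θ⟫ = ⟪F (y, z), w - θ⟫ := by
      rw [inner_sub_right]
    rw [h1]
    calc ⟪F (y, z), w - θ⟫ ≤ ‖F (y, z)‖ * ‖w - θ‖ := real_inner_le_norm _ _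
      _ ≤ CF * (B + (t + Z)) := by
          apply mul_le_mul hFb ?_ (norm_nonneg _) hCF0
          calc ‖w - θ‖ ≤ ‖w‖ + ‖θ‖ := norm_sub_le _ _
            _ ≤ B + (t + Z) := add_le_add hwB hθn
  have hwz : ‖w - z‖ ≤ B + Z := by
    calc ‖w - z‖ ≤ ‖w‖ + ‖z‖ := norm_sub_le _ _
      _ ≤ B + Z := add_le_add hwB hzZ
  have hwz2 : ‖w - z‖ ^ 2 ≤ (B + Z) ^ 2 := by
    apply pow_le_pow_left₀ (norm_nonneg _) hwz
  -- combine: t^2 ≤ a * t + bb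
  clear_value CF B Z a bb θ t
  clear hθ
  have hc : (0:ℝ) < 1 / (2 * γ) := by positivity
  have hkey2 : (1 / (2 * γ)) * t ^ 2 ≤ CF * (B + (t + Z)) + (1 / (2 * γ)) * (B + Z) ^ 2 := by
    linarith [key, hCS, mul_le_mul_of_nonneg_left hwz2 hc.le]
  have hquad : t ^ 2 ≤ a * t + bb := by
    have h2γ : (0:ℝ) < 2 * γ := by positivity
    have h5 := mul_le_mul_of_nonneg_left hkey2 h2γ.le
    have h4 : t ^ 2 ≤ 2 * γ * (CF * (B + (t + Z))) + (B + Z) ^ 2 := by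
      calc t ^ 2 = 2 * γ * (1 / (2 * γ) * t ^ 2) := by field_simp
        _ ≤ 2 * γ * (CF * (B + (t + Z)) + 1 / (2 * γ) * (B + Z) ^ 2) := h5
        _ = 2 * γ * (CF * (B + (t + Z))) + 2 * γ * (1 / (2 * γ) * (B + Z) ^ 2) := by ring
        _ = 2 * γ * (CF * (B + (t + Z))) + (B + Z) ^ 2 := by
            congr 1
            field_simp
    have h6 : a * t + bb = 2 * γ * (CF * (B + (t + Z))) + (B + Z) ^ 2 := by
      rw [haa, hbb]; ring
    linarith
  have htb : t ≤ a + bb + 1 := aux_quad_bound ha0 hbb0 ht0 hquad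
  linarith [hθn]
end

section
/- Let C ⊆ ℝⁿ be an open convex set, let F : ℝⁿ → ℝ^m be differentiable on C, and let L_F, L_{∇F} > 0 satisfy ‖F(w) − F(w')‖ ≤ L_F‖w − w'‖ and ‖DF(w) − DF(w')‖_{op} ≤ L_{∇F}‖w − w'‖ for all w, w' ∈ C, where DF(w) is the (Fréchet) derivative of F at w. Let γ > 0 and M_θ > 0. Then for all w, w' ∈ C and all θ, θ' ∈ ℝ^m with ‖θ‖ ≤ 2M_θ and ‖θ'‖ ≤ 2M_θ, one has ⟨DF(w)*θ − DF(w')*θ', w − w'⟩ + ⟨F(w) − F(w'), θ − θ'⟩ + (2γ L_F² + 2 L_{∇F} M_θ)‖w − w'‖² + (1/(2γ))‖θ − θ'‖² ≥ 0. -/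
open scoped RealInnerProductSpace

/-- monotonicity-type inequality for the gradient of
`(w, θ) ↦ ⟨F(w), θ⟩ + (γL_F² + L_{∇F}M_θ)‖w‖² + (1/(4γ))‖θ‖²`:
for `w, w' ∈ C` and `‖θ‖, ‖θ'‖ ≤ 2M_θ`,
`⟨DF(w)*θ − DF(w')*θ', w − w'⟩ + ⟨F(w) − F(w'), θ − θ'⟩
  + (2γL_F² + 2L_{∇F}M_θ)‖w − w'‖² + (1/(2γ))‖θ − θ'‖² ≥ 0`. -/
theorem gradient_monotonicity_inequality {n m : ℕ}
    (C : Set (EuclideanSpace ℝ (Fin n))) (hCo : IsOpen C) (hCc : Convex ℝ C)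
    (F : EuclideanSpace ℝ (Fin n) → EuclideanSpace ℝ (Fin m))
    (hdiff : ∀ w ∈ C, DifferentiableAt ℝ F w)
    (L_F LdF : ℝ) (hLF : 0 < L_F) (hLdF : 0 < LdF)
    (hlip : ∀ w ∈ C, ∀ w' ∈ C, ‖F w - F w'‖ ≤ L_F * ‖w - w'‖)
    (hlip' : ∀ w ∈ C, ∀ w' ∈ C, ‖fderiv ℝ F w - fderiv ℝ F w'‖ ≤ LdF * ‖w - w'‖)
    (γ Mθ : ℝ) (hγ : 0 < γ) (hM : 0 < Mθ) :
    ∀ w ∈ C, ∀ w' ∈ C, ∀ θ θ' : EuclideanSpace ℝ (Fin m),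
      ‖θ‖ ≤ 2 * Mθ → ‖θ'‖ ≤ 2 * Mθ →
      0 ≤ ⟪(fderiv ℝ F w).adjoint θ - (fderiv ℝ F w').adjoint θ', w - w'⟫ +
            ⟪F w - F w', θ - θ'⟫ +
            (2 * γ * L_F ^ 2 + 2 * LdF * Mθ) * ‖w - w'‖ ^ 2 +
            (1 / (2 * γ)) * ‖θ - θ'‖ ^ 2 := by
  intro w hw w' hw' θ θ' hθ hθ'
  set A := fderiv ℝ F w with hA
  set A' := fderiv ℝ F w' with hA'
  -- Lipschitz bound on the derivative norm
  have hlipOn : LipschitzOnWith (Real.toNNReal L_F) F C := by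
    rw [lipschitzOnWith_iff_dist_le_mul]
    intro x hx y hy
    rw [dist_eq_norm, dist_eq_norm]
    calc ‖F x - F y‖ ≤ L_F * ‖x - y‖ := hlip x hx y hy
    _ = (Real.toNNReal L_F : ℝ) * ‖x - y‖ := by
        rw [Real.coe_toNNReal _ hLF.le]
  have hAnorm : ‖A‖ ≤ L_F := by
    have := (hdiff w hw).hasFDerivAt.le_of_lipschitzOn (hCo.mem_nhds hw) hlipOn
    rwa [Real.coe_toNNReal _ hLF.le] at this
  set d := ‖w - w'‖ with hd
  set t := ‖θ - θ'‖ with ht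
  have hd0 : 0 ≤ d := norm_nonneg _
  have ht0 : 0 ≤ t := norm_nonneg _
  -- decomposition of the first inner product
  have e1 : ⟪A.adjoint θ - A'.adjoint θ', w - w'⟫ =
      ⟪θ - θ', A (w - w')⟫ + ⟪θ', (A - A') (w - w')⟫ := by
    simp only [inner_sub_left, ContinuousLinearMap.adjoint_inner_left,
      ContinuousLinearMap.sub_apply, inner_sub_right, map_sub]
    ring
  -- bound each piece
  have b1 : -(t * (L_F * d)) ≤ ⟪θ - θ', A (w - w')⟫ := by
    have h1 := abs_real_inner_le_norm (θ - θ') (A (w - w'))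
    have h2 : ‖A (w - w')‖ ≤ L_F * d := by
      calc ‖A (w - w')‖ ≤ ‖A‖ * ‖w - w'‖ := A.le_opNorm _
      _ ≤ L_F * d := by
          apply mul_le_mul_of_nonneg_right hAnorm (norm_nonneg _)
    have h3 : ‖θ - θ'‖ * ‖A (w - w')‖ ≤ t * (L_F * d) :=
      mul_le_mul_of_nonneg_left h2 ht0
    have := neg_abs_le ⟪θ - θ', A (w - w')⟫
    linarith
  have b2 : -(2 * LdF * Mθ * d ^ 2) ≤ ⟪θ', (A - A') (w - w')⟫ := by
    have h1 := abs_real_inner_le_norm θ' ((A - A') (w - w'))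
    have h2 : ‖(A - A') (w - w')‖ ≤ LdF * d * d := by
      calc ‖(A - A') (w - w')‖ ≤ ‖A - A'‖ * ‖w - w'‖ := (A - A').le_opNorm _
      _ ≤ (LdF * d) * d :=
          mul_le_mul_of_nonneg_right (hlip' w hw w' hw') (norm_nonneg _)
      _ = LdF * d * d := by ring
    have h3 : ‖θ'‖ * ‖(A - A') (w - w')‖ ≤ 2 * Mθ * (LdF * d * d) := by
      apply mul_le_mul hθ' h2 (norm_nonneg _) (by positivity)
    have h4 : 2 * Mθ * (LdF * d * d) = 2 * LdF * Mθ * d ^ 2 := by ring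
    have := neg_abs_le ⟪θ', (A - A') (w - w')⟫
    linarith
  have b3 : -(L_F * d * t) ≤ ⟪F w - F w', θ - θ'⟫ := by
    have h1 := abs_real_inner_le_norm (F w - F w') (θ - θ')
    have h3 : ‖F w - F w'‖ * ‖θ - θ'‖ ≤ L_F * d * t :=
      mul_le_mul_of_nonneg_right (hlip w hw w' hw') ht0
    have := neg_abs_le ⟪F w - F w', θ - θ'⟫
    linarith
  -- AM-GM
  have amgm : 0 ≤ 2 * γ * L_F ^ 2 * d ^ 2 - 2 * L_F * d * t + 1 / (2 * γ) * t ^ 2 := by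
    have heq : 2 * γ * L_F ^ 2 * d ^ 2 - 2 * L_F * d * t + 1 / (2 * γ) * t ^ 2
        = (1 / (2 * γ)) * (2 * γ * L_F * d - t) ^ 2 := by
      field_simp
      ring
    rw [heq]
    positivity
  rw [e1]
  linarith [b1, b2, b3, amgm]
end

section
/- Let C ⊆ ℝⁿ be an open convex set, let F : ℝⁿ → ℝ^m be differentiable on C, and let L_F, L_{∇F} > 0 satisfy ‖F(w) − F(w')‖ ≤ L_F‖w − w'‖ and ‖DF(w) − DF(w')‖_{op} ≤ L_{∇F}‖w − w'‖ for all w, w' ∈ C. Let γ > 0 and M_θ > 0. Then the function (w, θ) ↦ ⟨F(w), θ⟩ + (γ L_F² + L_{∇F} M_θ)‖w‖² + (1/(4γ))‖θ‖² is convex on the convex set C × {θ ∈ ℝ^m : ‖θ‖ ≤ 2M_θ}. -/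
/-!
Put `z = a • w + b • w'`. Expanding `F` to first order at `z`, the convexity defect
`a f(w, θ) + b f(w', θ') - f(z, a θ + b θ')` of `f(w, θ) = ⟪F w, θ⟫ + c ‖w‖² + d ‖θ‖²` is
`a ⟪r w, θ⟫ + b ⟪r w', θ'⟫ + a b ⟪DF(z) (w - w'), θ - θ'⟫ + a b (c ‖w - w'‖² + d ‖θ - θ'‖²)`,
where `r` is the Taylor remainder at `z`. Since `DF` is `L_{∇F}`-Lipschitz,
`‖r v‖ ≤ L_{∇F}/2 ‖v - z‖²`, so with `‖θ‖, ‖θ'‖ ≤ 2 M_θ` the two remainder terms are at least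
`-a b L_{∇F} M_θ ‖w - w'‖²`. Since `F` is `L_F`-Lipschitz on the open set `C`, `‖DF(z)‖ ≤ L_F`,
and AM-GM absorbs the cross term into `a b (γ L_F² ‖w - w'‖² + ‖θ - θ'‖² / (4γ))`.
-/

open scoped RealInnerProductSpace

section Taylor

variable {E G : Type*} [NormedAddCommGroup E] [NormedSpace ℝ E]
  [NormedAddCommGroup G] [NormedSpace ℝ G]

theorem Convex.norm_sub_sub_fderiv_le_of_lipschitz_fderiv {C : Set E} (hC : Convex ℝ C)
    {F : E → G} (hdiff : ∀ w ∈ C, DifferentiableAt ℝ F w) {L : ℝ}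
    (hlip : ∀ w ∈ C, ∀ w' ∈ C, ‖fderiv ℝ F w - fderiv ℝ F w'‖ ≤ L * ‖w - w'‖)
    {x y : E} (hx : x ∈ C) (hy : y ∈ C) :
    ‖F y - F x - fderiv ℝ F x (y - x)‖ ≤ L / 2 * ‖y - x‖ ^ 2 := by
  set v := y - x
  have hseg : ∀ t ∈ Set.Icc (0 : ℝ) 1, x + t • v ∈ C := fun t ht =>
    hC.add_smul_sub_mem hx hy ht
  let g : ℝ → G := fun t => F (x + t • v) - F x - t • fderiv ℝ F x v
  have hg : ∀ t ∈ Set.Icc (0 : ℝ) 1,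
      HasDerivAt g (fderiv ℝ F (x + t • v) v - fderiv ℝ F x v) t := by
    intro t ht
    have hline : HasDerivAt (fun t : ℝ => x + t • v) v t := by
      simpa using ((hasDerivAt_id t).smul_const v).const_add x
    refine (((hdiff _ (hseg t ht)).hasFDerivAt.comp_hasDerivAt t hline).sub_const
      (F x)).sub ?_
    simpa using (hasDerivAt_id t).smul_const (fderiv ℝ F x v)
  have hg' : ∀ t ∈ Set.Ico (0 : ℝ) 1,
      ‖fderiv ℝ F (x + t • v) v - fderiv ℝ F x v‖ ≤ L * ‖v‖ ^ 2 * t := by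
    intro t ht
    calc ‖fderiv ℝ F (x + t • v) v - fderiv ℝ F x v‖
        ≤ ‖fderiv ℝ F (x + t • v) - fderiv ℝ F x‖ * ‖v‖ :=
          (fderiv ℝ F (x + t • v) - fderiv ℝ F x).le_opNorm v
      _ ≤ L * ‖x + t • v - x‖ * ‖v‖ := by
          gcongr
          exact hlip _ (hseg t (Set.Ico_subset_Icc_self ht)) x hx
      _ = L * ‖v‖ ^ 2 * t := by
          rw [add_sub_cancel_left, norm_smul, Real.norm_of_nonneg ht.1]
          ring
  have hB : ∀ t : ℝ, HasDerivAt (fun t => L * ‖v‖ ^ 2 / 2 * t ^ 2) (L * ‖v‖ ^ 2 * t) t :=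
    fun t => ((hasDerivAt_pow 2 t).const_mul _).congr_deriv (by ring)
  calc ‖F y - F x - fderiv ℝ F x (y - x)‖ = ‖g 1‖ := by simp [g, v]
    _ ≤ L * ‖v‖ ^ 2 / 2 * 1 ^ 2 := image_norm_le_of_norm_deriv_right_le_deriv_boundary
        (fun t ht => (hg t ht).continuousAt.continuousWithinAt)
        (fun t ht => (hg t (Set.Ico_subset_Icc_self ht)).hasDerivWithinAt)
        (by simp [g]) hB hg' (Set.right_mem_Icc.2 zero_le_one)
    _ = L / 2 * ‖y - x‖ ^ 2 := by ring

end Taylor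

section InnerProduct

variable {E G : Type*} [NormedAddCommGroup G] [InnerProductSpace ℝ G] {a b : ℝ}

theorem norm_smul_add_smul_sq (hab : a + b = 1) (x y : G) :
    ‖a • x + b • y‖ ^ 2 = a * ‖x‖ ^ 2 + b * ‖y‖ ^ 2 - a * b * ‖x - y‖ ^ 2 := by
  rw [norm_add_sq_real, norm_sub_sq_real, norm_smul, norm_smul, real_inner_smul_left,
    real_inner_smul_right, Real.norm_eq_abs, Real.norm_eq_abs, mul_pow, mul_pow, sq_abs, sq_abs]
  obtain rfl := eq_sub_of_add_eq hab
  ring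

theorem inner_apply_smul_add_smul_eq [AddCommGroup E] [Module ℝ E] (F : E → G) (D : E →ₗ[ℝ] G)
    (hab : a + b = 1) {w w' z : E} (hz : z = a • w + b • w') (θ θ' : G) :
    a * ⟪F w, θ⟫ + b * ⟪F w', θ'⟫ - ⟪F z, a • θ + b • θ'⟫ =
      a * ⟪F w - F z - D (w - z), θ⟫ + b * ⟪F w' - F z - D (w' - z), θ'⟫ +
        a * b * ⟪D (w - w'), θ - θ'⟫ := by
  have hwz : w - z = b • (w - w') := by
    rw [hz, show a = 1 - b by linarith]; module
  have hw'z : w' - z = -(a • (w - w')) := by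
    rw [hz, show b = 1 - a by linarith]; module
  simp only [hwz, hw'z, map_neg, map_smul, inner_sub_left, inner_sub_right, inner_add_right,
    inner_neg_left, real_inner_smul_left, real_inner_smul_right]
  ring

theorem inner_apply_smul_add_smul_le [NormedAddCommGroup E] [NormedSpace ℝ E] {F : E → G}
    {D : E →L[ℝ] G} {K L R : ℝ} (hD : ‖D‖ ≤ K) (ha : 0 ≤ a) (hb : 0 ≤ b) (hab : a + b = 1)
    {w w' z : E} (hz : z = a • w + b • w')
    (hrw : ‖F w - F z - D (w - z)‖ ≤ L / 2 * ‖w - z‖ ^ 2)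
    (hrw' : ‖F w' - F z - D (w' - z)‖ ≤ L / 2 * ‖w' - z‖ ^ 2)
    {θ θ' : G} (hθ : ‖θ‖ ≤ R) (hθ' : ‖θ'‖ ≤ R) :
    ⟪F z, a • θ + b • θ'⟫ ≤ a * ⟪F w, θ⟫ + b * ⟪F w', θ'⟫ +
      a * b * (L * R / 2 * ‖w - w'‖ ^ 2 + K * ‖w - w'‖ * ‖θ - θ'‖) := by
  have hR : 0 ≤ R := (norm_nonneg θ).trans hθ
  have hwz : ‖w - z‖ = b * ‖w - w'‖ := by
    rw [hz, show a = 1 - b by linarith, ← norm_smul_of_nonneg hb]; congr 1; module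
  have hw'z : ‖w' - z‖ = a * ‖w - w'‖ := by
    rw [hz, show b = 1 - a by linarith, ← norm_smul_of_nonneg ha, ← norm_neg]; congr 1; module
  have hinner {x y : G} {B : ℝ} (hx : ‖x‖ ≤ B) (hy : ‖y‖ ≤ R) : -(B * R) ≤ ⟪x, y⟫ :=
    calc -(B * R) ≤ -(‖x‖ * ‖y‖) :=
          neg_le_neg (mul_le_mul hx hy (norm_nonneg y) ((norm_nonneg x).trans hx))
      _ ≤ ⟪x, y⟫ := neg_le_of_abs_le (abs_real_inner_le_norm x y)
  have h₁ := mul_le_mul_of_nonneg_left (hinner hrw hθ) ha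
  have h₂ := mul_le_mul_of_nonneg_left (hinner hrw' hθ') hb
  have h₃ : -(K * ‖w - w'‖ * ‖θ - θ'‖) ≤ ⟪D (w - w'), θ - θ'⟫ :=
    calc -(K * ‖w - w'‖ * ‖θ - θ'‖) ≤ -(‖D (w - w')‖ * ‖θ - θ'‖) := by
          gcongr; exact D.le_of_opNorm_le hD _
      _ ≤ _ := neg_le_of_abs_le (abs_real_inner_le_norm _ _)
  have h₃' := mul_le_mul_of_nonneg_left h₃ (mul_nonneg ha hb)
  rw [hwz] at h₁
  rw [hw'z] at h₂
  have hdefect := inner_apply_smul_add_smul_eq F (D : E →ₗ[ℝ] G) hab hz θ θ'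
  simp only [ContinuousLinearMap.coe_coe] at hdefect
  have hsplit : a * (L / 2 * (b * ‖w - w'‖) ^ 2 * R) + b * (L / 2 * (a * ‖w - w'‖) ^ 2 * R) =
      a * b * (L * R / 2 * ‖w - w'‖ ^ 2) := by
    linear_combination (L * R / 2 * a * b * ‖w - w'‖ ^ 2) * hab
  linarith

end InnerProduct

theorem convexOn_inner_add_norm_sq {E G : Type*} [NormedAddCommGroup E] [InnerProductSpace ℝ E]
    [NormedAddCommGroup G] [InnerProductSpace ℝ G] {C : Set E} (hC : Convex ℝ C) {F : E → G}
    (hdiff : ∀ w ∈ C, DifferentiableAt ℝ F w) {K L R γ : ℝ}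
    (hD : ∀ w ∈ C, ‖fderiv ℝ F w‖ ≤ K)
    (hlip : ∀ w ∈ C, ∀ w' ∈ C, ‖fderiv ℝ F w - fderiv ℝ F w'‖ ≤ L * ‖w - w'‖) (hγ : 0 < γ) :
    ConvexOn ℝ (C ×ˢ Metric.closedBall 0 R) (fun p : E × G =>
      ⟪F p.1, p.2⟫ + (γ * K ^ 2 + L * R / 2) * ‖p.1‖ ^ 2 + 1 / (4 * γ) * ‖p.2‖ ^ 2) := by
  refine ⟨hC.prod (convex_closedBall 0 R), ?_⟩
  rintro ⟨w, θ⟩ ⟨hw, hθ⟩ ⟨w', θ'⟩ ⟨hw', hθ'⟩ a b ha hb hab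
  rw [mem_closedBall_zero_iff] at hθ hθ'
  have hz := hC hw hw' ha hb hab
  have hcross := inner_apply_smul_add_smul_le (hD _ hz) ha hb hab rfl
    (hC.norm_sub_sub_fderiv_le_of_lipschitz_fderiv hdiff hlip hz hw)
    (hC.norm_sub_sub_fderiv_le_of_lipschitz_fderiv hdiff hlip hz hw') hθ hθ'
  have hAMGM : K * ‖w - w'‖ * ‖θ - θ'‖ ≤
      γ * K ^ 2 * ‖w - w'‖ ^ 2 + 1 / (4 * γ) * ‖θ - θ'‖ ^ 2 := by
    have hsq : γ * K ^ 2 * ‖w - w'‖ ^ 2 + 1 / (4 * γ) * ‖θ - θ'‖ ^ 2 - K * ‖w - w'‖ * ‖θ - θ'‖ =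
        (2 * γ * K * ‖w - w'‖ - ‖θ - θ'‖) ^ 2 / (4 * γ) := by
      field_simp; ring
    rw [← sub_nonneg, hsq]
    positivity
  have hAMGM' := mul_le_mul_of_nonneg_left hAMGM (mul_nonneg ha hb)
  simp only [Prod.smul_mk, Prod.mk_add_mk, smul_eq_mul]
  rw [norm_smul_add_smul_sq hab w w', norm_smul_add_smul_sq hab θ θ']
  linarith

theorem auxiliary_function_convex_general {n m : ℕ}
    (C : Set (EuclideanSpace ℝ (Fin n))) (hCo : IsOpen C) (hCc : Convex ℝ C)
    (F : EuclideanSpace ℝ (Fin n) → EuclideanSpace ℝ (Fin m))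
    (hdiff : ∀ w ∈ C, DifferentiableAt ℝ F w)
    (L_F LdF : ℝ) (hLF : 0 < L_F)
    (hlip : ∀ w ∈ C, ∀ w' ∈ C, ‖F w - F w'‖ ≤ L_F * ‖w - w'‖)
    (hlip' : ∀ w ∈ C, ∀ w' ∈ C, ‖fderiv ℝ F w - fderiv ℝ F w'‖ ≤ LdF * ‖w - w'‖)
    (γ Mθ : ℝ) (hγ : 0 < γ) :
    ConvexOn ℝ (C ×ˢ Metric.closedBall (0 : EuclideanSpace ℝ (Fin m)) (2 * Mθ))
      (fun p : EuclideanSpace ℝ (Fin n) × EuclideanSpace ℝ (Fin m) =>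
        ⟪F p.1, p.2⟫ + (γ * L_F ^ 2 + LdF * Mθ) * ‖p.1‖ ^ 2 +
          (1 / (4 * γ)) * ‖p.2‖ ^ 2) := by
  have hD : ∀ w ∈ C, ‖fderiv ℝ F w‖ ≤ L_F := fun w hw =>
    norm_fderiv_le_of_lip' ℝ hLF.le
      (Filter.mem_of_superset (hCo.mem_nhds hw) fun x hx => hlip x hx w hw)
  convert convexOn_inner_add_norm_sq hCc hdiff hD hlip' hγ using 5
  ring

/-- convexity of
`(w, θ) ↦ ⟨F(w), θ⟩ + (γL_F² + L_{∇F}M_θ)‖w‖² + (1/(4γ))‖θ‖²`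
on `C × {θ : ‖θ‖ ≤ 2M_θ}` when `F` and `DF` are Lipschitz on the open convex set `C`. -/
theorem auxiliary_function_convex {n m : ℕ}
    (C : Set (EuclideanSpace ℝ (Fin n))) (hCo : IsOpen C) (hCc : Convex ℝ C)
    (F : EuclideanSpace ℝ (Fin n) → EuclideanSpace ℝ (Fin m))
    (hdiff : ∀ w ∈ C, DifferentiableAt ℝ F w)
    (L_F LdF : ℝ) (hLF : 0 < L_F) (hLdF : 0 < LdF)
    (hlip : ∀ w ∈ C, ∀ w' ∈ C, ‖F w - F w'‖ ≤ L_F * ‖w - w'‖)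
    (hlip' : ∀ w ∈ C, ∀ w' ∈ C, ‖fderiv ℝ F w - fderiv ℝ F w'‖ ≤ LdF * ‖w - w'‖)
    (γ Mθ : ℝ) (hγ : 0 < γ) (hM : 0 < Mθ) :
    ConvexOn ℝ (C ×ˢ Metric.closedBall (0 : EuclideanSpace ℝ (Fin m)) (2 * Mθ))
      (fun p : EuclideanSpace ℝ (Fin n) × EuclideanSpace ℝ (Fin m) =>
        ⟪F p.1, p.2⟫ + (γ * L_F ^ 2 + LdF * Mθ) * ‖p.1‖ ^ 2 +
          (1 / (4 * γ)) * ‖p.2‖ ^ 2) :=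
  auxiliary_function_convex_general C hCo hCc F hdiff L_F LdF hLF hlip hlip' γ Mθ hγ
end

section
/- Let Γ ⊆ ℝ^{m₂} be a convex set, let z̄, θ̄ ∈ Γ, let A : ℝ^{m₂} → ℝ^{m₂} be a linear map, let F̄ ∈ ℝ^{m₂}, and let γ > 0. Suppose there exist n₁, n₂ ∈ ℝ^{m₂} such that: (i) A*(z̄ − θ̄) + F̄ − (z̄ − θ̄)/γ + n₁ = 0 and ⟨n₁, w − z̄⟩ ≤ 0 for all w ∈ Γ; and (ii) F̄ + (θ̄ − z̄)/γ + n₂ = 0 and ⟨n₂, w − θ̄⟩ ≤ 0 for all w ∈ Γ. Then ⟨A*(z̄ − θ̄), z̄ − θ̄⟩ ≤ 0. If in addition A is positive-definite (⟨A u, u⟩ > 0 for every u ≠ 0), then z̄ = θ̄. -/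
open scoped RealInnerProductSpace

/-- if `z̄, θ̄ ∈ Γ` (Γ convex) satisfy the two normal-cone stationarity
conditions (i) `A*(z̄ − θ̄) + F̄ − (z̄ − θ̄)/γ + n₁ = 0` with `n₁ ∈ N_Γ(z̄)` and
(ii) `F̄ + (θ̄ − z̄)/γ + n₂ = 0` with `n₂ ∈ N_Γ(θ̄)`, then
`⟨A*(z̄ − θ̄), z̄ − θ̄⟩ ≤ 0`; if moreover `A` is positive-definite then `z̄ = θ̄`. -/
theorem gap_constraint_qualification_step {m : ℕ}
    (Γ : Set (EuclideanSpace ℝ (Fin m))) (hconv : Convex ℝ Γ)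
    (zb θb : EuclideanSpace ℝ (Fin m)) (hzb : zb ∈ Γ) (hθb : θb ∈ Γ)
    (A : EuclideanSpace ℝ (Fin m) →L[ℝ] EuclideanSpace ℝ (Fin m))
    (Fb : EuclideanSpace ℝ (Fin m)) (γ : ℝ) (hγ : 0 < γ)
    (n₁ n₂ : EuclideanSpace ℝ (Fin m))
    (h1 : A.adjoint (zb - θb) + Fb - (1 / γ) • (zb - θb) + n₁ = 0)
    (h1n : ∀ w ∈ Γ, ⟪n₁, w - zb⟫ ≤ 0)
    (h2 : Fb + (1 / γ) • (θb - zb) + n₂ = 0)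
    (h2n : ∀ w ∈ Γ, ⟪n₂, w - θb⟫ ≤ 0) :
    ⟪A.adjoint (zb - θb), zb - θb⟫ ≤ 0 ∧
      ((∀ u : EuclideanSpace ℝ (Fin m), u ≠ 0 → 0 < ⟪A u, u⟫) → zb = θb) := by
  set d := zb - θb with hd
  have hn1 : n₁ = -(A.adjoint d + Fb - (1 / γ) • d) :=
    eq_neg_of_add_eq_zero_right h1
  have hn2 : n₂ = -(Fb + (1 / γ) • (θb - zb)) :=
    eq_neg_of_add_eq_zero_right h2
  have key1 := h1n θb hθb
  have key2 := h2n zb hzb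
  have e1 : (θb - zb : EuclideanSpace ℝ (Fin m)) = -d := by rw [hd]; abel
  rw [hn1, e1, inner_neg_neg, inner_sub_left, inner_add_left, real_inner_smul_left] at key1
  rw [hn2, e1, inner_neg_left, inner_add_left, real_inner_smul_left, inner_neg_left,
    real_inner_comm d (zb - θb)] at key2
  have hmain : ⟪A.adjoint d, d⟫ ≤ 0 := by
    rw [← hd] at key2; nlinarith [key1, key2]
  refine ⟨hmain, fun hpd => ?_⟩
  by_contra hne
  have hdne : d ≠ 0 := by
    intro h0; exact hne (sub_eq_zero.mp (hd ▸ h0))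
  have h3 : ⟪A.adjoint d, d⟫ = ⟪A d, d⟫ := by
    rw [ContinuousLinearMap.adjoint_inner_left, real_inner_comm]
  have := hpd d hdne
  linarith [hmain, h3 ▸ hmain]
end

section
/- Let Y ⊆ ℝ^{m₁} be nonempty, closed, and convex; let ζ_i : ℝ^{m₁} × ℝ^{m₂} → ℝ, i = 1,…,s, be convex and continuous, and define Γ(y) := {z ∈ ℝ^{m₂} : ζ_i(y,z) ≤ 0 for all i}. Let Ψ : ℝ^{m₁} × ℝ^{m₂} → ℝ and F : ℝ^{m₁} × ℝ^{m₂} → ℝ^{m₂} be continuous, let γ > 0, and define μ_γ(y,z) := inf_{θ ∈ Γ(y)} ( ⟨F(y,z), θ⟩ + (1/(2γ))‖θ − z‖² ) and S(y) := {z ∈ Γ(y) : ⟨F(y,z), θ − z⟩ ≥ 0 for all θ ∈ Γ(y)}. Assume Ψ is bounded from below on {(y,z) : y ∈ Y, z ∈ Γ(y)} and there is an open set U ⊇ Y with Γ(y) ≠ ∅ for all y ∈ U. Suppose the set S* of global minimizers of Ψ over {(y,z) : y ∈ Y, z ∈ S(y)} is nonempty and compact. Then for every δ > 0 there exists ε̄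 > 0 such that for every ε ∈ (0, ε̄] there is a point (y_ε, z_ε) that is a local minimizer of Ψ over the relaxed feasible set {(y,z) : y ∈ Y, z ∈ Γ(y), ⟨F(y,z), z⟩ − μ_γ(y,z) ≤ ε} and satisfies dist((y_ε, z_ε), S*) < δ. -/
open scoped RealInnerProductSpace

/-- approximation of solutions of the VI-constrained problem by local
minimizers of the ε-relaxed gap-function problem. Here
`μ_γ(y,z) = inf_{θ ∈ Γ(y)} (⟨F(y,z), θ⟩ + (1/(2γ))‖θ − z‖²)` and
`S(y)` is the solution set of the variational inequality over `Γ(y)`. If the set `S*`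
of global minimizers of `Ψ` over `{(y,z) : y ∈ Y, z ∈ S(y)}` is nonempty and compact,
then for every `δ > 0` there is `ε̄ > 0` such that for every `ε ∈ (0, ε̄]` some local
minimizer of `Ψ` over the ε-relaxed feasible set lies within distance `δ` of `S*`. -/
theorem relaxed_local_minimizers_approximate {m₁ m₂ s : ℕ}
    (Y : Set (EuclideanSpace ℝ (Fin m₁)))
    (hYne : Y.Nonempty) (hYcl : IsClosed Y) (hYconv : Convex ℝ Y)
    (ζ : Fin s → EuclideanSpace ℝ (Fin m₁) × EuclideanSpace ℝ (Fin m₂) → ℝ)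
    (hζconv : ∀ i, ConvexOn ℝ Set.univ (ζ i))
    (hζcont : ∀ i, Continuous (ζ i))
    (Γ : EuclideanSpace ℝ (Fin m₁) → Set (EuclideanSpace ℝ (Fin m₂)))
    (hΓ : ∀ y, Γ y = {z | ∀ i, ζ i (y, z) ≤ 0})
    (Ψ : EuclideanSpace ℝ (Fin m₁) × EuclideanSpace ℝ (Fin m₂) → ℝ)
    (hΨ : Continuous Ψ)
    (F : EuclideanSpace ℝ (Fin m₁) × EuclideanSpace ℝ (Fin m₂) →
      EuclideanSpace ℝ (Fin m₂))
    (hF : Continuous F) (γ : ℝ) (hγ : 0 < γ)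
    (μ : EuclideanSpace ℝ (Fin m₁) × EuclideanSpace ℝ (Fin m₂) → ℝ)
    (hμ : ∀ p : EuclideanSpace ℝ (Fin m₁) × EuclideanSpace ℝ (Fin m₂),
      μ p = sInf ((fun θ => ⟪F p, θ⟫ + (1 / (2 * γ)) * ‖θ - p.2‖ ^ 2) '' Γ p.1))
    (S : EuclideanSpace ℝ (Fin m₁) → Set (EuclideanSpace ℝ (Fin m₂)))
    (hS : ∀ y, S y = {z ∈ Γ y | ∀ θ ∈ Γ y, 0 ≤ ⟪F (y, z), θ - z⟫})
    (hbdd : ∃ c : ℝ, ∀ p : EuclideanSpace ℝ (Fin m₁) × EuclideanSpace ℝ (Fin m₂),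
      p.1 ∈ Y → p.2 ∈ Γ p.1 → c ≤ Ψ p)
    (U : Set (EuclideanSpace ℝ (Fin m₁))) (hU : IsOpen U) (hYU : Y ⊆ U)
    (hΓne : ∀ y ∈ U, (Γ y).Nonempty)
    (Sstar : Set (EuclideanSpace ℝ (Fin m₁) × EuclideanSpace ℝ (Fin m₂)))
    (hSstar : Sstar = {p | p.1 ∈ Y ∧ p.2 ∈ S p.1 ∧
      ∀ q : EuclideanSpace ℝ (Fin m₁) × EuclideanSpace ℝ (Fin m₂),
        q.1 ∈ Y → q.2 ∈ S q.1 → Ψ p ≤ Ψ q})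
    (hSne : Sstar.Nonempty) (hScpt : IsCompact Sstar) :
    ∀ δ > (0 : ℝ), ∃ εbar > (0 : ℝ), ∀ ε ∈ Set.Ioc (0 : ℝ) εbar,
      ∃ pε : EuclideanSpace ℝ (Fin m₁) × EuclideanSpace ℝ (Fin m₂),
        pε ∈ {p : EuclideanSpace ℝ (Fin m₁) × EuclideanSpace ℝ (Fin m₂) |
          p.1 ∈ Y ∧ p.2 ∈ Γ p.1 ∧ ⟪F p, p.2⟫ - μ p ≤ ε} ∧
        IsLocalMinOn Ψ {p : EuclideanSpace ℝ (Fin m₁) × EuclideanSpace ℝ (Fin m₂) |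
          p.1 ∈ Y ∧ p.2 ∈ Γ p.1 ∧ ⟪F p, p.2⟫ - μ p ≤ ε} pε ∧
        Metric.infDist pε Sstar < δ := by
    classical
  intro δ hδ
  -- closedness of Γ y
  have hΓcl : ∀ y, IsClosed (Γ y) := by
    intro y
    rw [hΓ]
    have he : {z : EuclideanSpace ℝ (Fin m₂) | ∀ i, ζ i (y, z) ≤ 0} =
        ⋂ i, {z | ζ i (y, z) ≤ 0} := by ext z; simp
    rw [he]
    exact isClosed_iInter fun i =>
      isClosed_le ((hζcont i).comp (Continuous.prodMk_right y)) continuous_const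
  -- convexity of the graph of Γ
  have hmix : ∀ (a b : ℝ), 0 ≤ a → 0 ≤ b → a + b = 1 →
      ∀ y₁ z₁ y₂ z₂, z₁ ∈ Γ y₁ → z₂ ∈ Γ y₂ →
        a • z₁ + b • z₂ ∈ Γ (a • y₁ + b • y₂) := by
    intro a b ha hb hab y₁ z₁ y₂ z₂ h₁ h₂
    rw [hΓ] at h₁ h₂ ⊢
    intro i
    have key := (hζconv i).2 (Set.mem_univ (y₁, z₁)) (Set.mem_univ (y₂, z₂)) ha hb hab
    simp only [smul_eq_mul] at key
    have heq : a • ((y₁, z₁) : EuclideanSpace ℝ (Fin m₁) × EuclideanSpace ℝ (Fin m₂))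
        + b • (y₂, z₂) = (a • y₁ + b • y₂, a • z₁ + b • z₂) := rfl
    rw [heq] at key
    nlinarith [h₁ i, h₂ i, mul_nonneg ha (neg_nonneg.mpr (h₁ i)),
      mul_nonneg hb (neg_nonneg.mpr (h₂ i))]
  -- the integrand is bounded below
  have hbddb : ∀ p : EuclideanSpace ℝ (Fin m₁) × EuclideanSpace ℝ (Fin m₂),
      BddBelow ((fun θ => ⟪F p, θ⟫ + (1 / (2 * γ)) * ‖θ - p.2‖ ^ 2) '' Γ p.1) := by
    intro p
    refine ⟨⟪F p, p.2⟫ - (γ / 2) * ‖F p‖ ^ 2, ?_⟩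
    rintro v ⟨θ, hθ, rfl⟩
    have h2 := abs_real_inner_le_norm (F p) (θ - p.2)
    have h4 : ⟪F p, θ⟫ = ⟪F p, θ - p.2⟫ + ⟪F p, p.2⟫ := by
      rw [inner_sub_right]; ring
    have h5 : 0 ≤ (1 / (2 * γ)) * (γ * ‖F p‖ - ‖θ - p.2‖) ^ 2 := by positivity
    have h6 : (1 / (2 * γ)) * (γ * ‖F p‖ - ‖θ - p.2‖) ^ 2
        = (γ / 2) * ‖F p‖ ^ 2 - ‖F p‖ * ‖θ - p.2‖ + (1 / (2 * γ)) * ‖θ - p.2‖ ^ 2 := by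
      field_simp
      ring
    have h7 := (abs_le.mp h2).1
    simp only [Set.mem_setOf_eq]
    linarith
  have hμle : ∀ (p : EuclideanSpace ℝ (Fin m₁) × EuclideanSpace ℝ (Fin m₂)) θ, θ ∈ Γ p.1 →
      μ p ≤ ⟪F p, θ⟫ + (1 / (2 * γ)) * ‖θ - p.2‖ ^ 2 := by
    intro p θ hθ
    rw [hμ]
    exact csInf_le (hbddb p) ⟨θ, hθ, rfl⟩
  -- VI solutions have nonpositive gap
  have hS_gap : ∀ p : EuclideanSpace ℝ (Fin m₁) × EuclideanSpace ℝ (Fin m₂),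
      p.2 ∈ S p.1 → ⟪F p, p.2⟫ - μ p ≤ 0 := by
    intro p hp
    rw [hS] at hp
    obtain ⟨hpΓ, hvi⟩ := hp
    have hle : ⟪F p, p.2⟫ ≤ μ p := by
      rw [hμ]
      have hne' : ((fun θ => ⟪F p, θ⟫ + (1 / (2 * γ)) * ‖θ - p.2‖ ^ 2) '' Γ p.1).Nonempty :=
        ⟨_, ⟨p.2, hpΓ, rfl⟩⟩
      apply le_csInf hne'
      rintro v ⟨θ, hθ, rfl⟩
      have h1 : (0 : ℝ) ≤ ⟪F p, θ - p.2⟫ := hvi θ hθ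
      have h2 : ⟪F p, θ - p.2⟫ = ⟪F p, θ⟫ - ⟪F p, p.2⟫ := inner_sub_right _ _ _
      have h3 : 0 ≤ (1 / (2 * γ)) * ‖θ - p.2‖ ^ 2 := by positivity
      linarith
    linarith
  -- nonpositive gap implies VI solution
  have hgap_S : ∀ p : EuclideanSpace ℝ (Fin m₁) × EuclideanSpace ℝ (Fin m₂),
      p.2 ∈ Γ p.1 → ⟪F p, p.2⟫ - μ p ≤ 0 → p.2 ∈ S p.1 := by
    intro p hpΓ hgap
    rw [hS]
    refine ⟨hpΓ, fun θ hθ => ?_⟩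
    have key : ∀ t : ℝ, 0 < t → t ≤ 1 →
        0 ≤ ⟪F p, θ - p.2⟫ + (1 / (2 * γ)) * t * ‖θ - p.2‖ ^ 2 := by
      intro t ht0 ht1
      have hmem : p.2 + t • (θ - p.2) ∈ Γ p.1 := by
        have h := hmix (1 - t) t (by linarith) ht0.le (by ring) p.1 p.2 p.1 θ hpΓ hθ
        have e1 : (1 - t) • p.1 + t • p.1 = p.1 := by module
        have e2 : (1 - t) • p.2 + t • θ = p.2 + t • (θ - p.2) := by module
        rwa [e1, e2] at h
      have h1 := hμle p _ hmem
      have h2 : ⟪F p, p.2 + t • (θ - p.2)⟫ = ⟪F p, p.2⟫ + t * ⟪F p, θ - p.2⟫ := by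
        rw [inner_add_right, real_inner_smul_right]
      have h3 : ‖p.2 + t • (θ - p.2) - p.2‖ ^ 2 = t ^ 2 * ‖θ - p.2‖ ^ 2 := by
        have e3 : p.2 + t • (θ - p.2) - p.2 = t • (θ - p.2) := by abel
        rw [e3, norm_smul, Real.norm_eq_abs, abs_of_pos ht0, mul_pow]
      rw [h2, h3] at h1
      have h4 : t * 0 ≤ t * (⟪F p, θ - p.2⟫ + (1 / (2 * γ)) * t * ‖θ - p.2‖ ^ 2) := by
        nlinarith
      exact le_of_mul_le_mul_left h4 ht0
    by_contra hA
    push_neg at hA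
    have hB : (0 : ℝ) ≤ ‖θ - p.2‖ ^ 2 := by positivity
    have hc : (0 : ℝ) < 1 / (2 * γ) := by positivity
    rcases eq_or_lt_of_le hB with hB0 | hB0
    · have h5 := key 1 one_pos le_rfl
      nlinarith
    · set c := (1 / (2 * γ)) with hcdef
      set A := ⟪F p, θ - p.2⟫ with hAdef
      set B := ‖θ - p.2‖ ^ 2 with hBdef
      have hApos : 0 < -A := by linarith
      have htpos : (0 : ℝ) < min 1 ((-A) / (2 * (c * B))) :=
        lt_min one_pos (by positivity)
      have h5 := key _ htpos (min_le_left _ _)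
      have h6 : c * min 1 ((-A) / (2 * (c * B))) * B ≤ -A / 2 := by
        have hmin : min 1 ((-A) / (2 * (c * B))) ≤ (-A) / (2 * (c * B)) := min_le_right _ _
        have hcB : 0 < c * B := by positivity
        calc c * min 1 ((-A) / (2 * (c * B))) * B
            ≤ c * ((-A) / (2 * (c * B))) * B := by
              apply mul_le_mul_of_nonneg_right (mul_le_mul_of_nonneg_left hmin hc.le) hB
          _ = -A / 2 := by field_simp
      linarith
  -- lower semicontinuity of Γ via convexity of the inf-distance
  have hkey : ∀ yb ∈ U, ∀ θb ∈ Γ yb, ∀ yn : ℕ → EuclideanSpace ℝ (Fin m₁),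
      (∀ n, yn n ∈ U) → Filter.Tendsto yn Filter.atTop (nhds yb) →
      ∃ θn : ℕ → EuclideanSpace ℝ (Fin m₂),
        (∀ n, θn n ∈ Γ (yn n)) ∧ Filter.Tendsto θn Filter.atTop (nhds θb) := by
    intro yb hyb θb hθb yn hynU hyn
    obtain ⟨ρ, hρ0, hρ⟩ := Metric.isOpen_iff.mp hU yb hyb
    choose f hf1 hf2 using fun (y : EuclideanSpace ℝ (Fin m₁)) (hy : y ∈ U) =>
      (hΓcl y).exists_infDist_eq_dist (hΓne y hy) θb
    have hconv : ConvexOn ℝ (Metric.ball yb ρ) (fun y => Metric.infDist θb (Γ y)) := by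
      refine ⟨convex_ball yb ρ, ?_⟩
      intro y₁ h₁ y₂ h₂ a b ha hb hab
      have hyU1 : y₁ ∈ U := hρ h₁
      have hyU2 : y₂ ∈ U := hρ h₂
      have hmem := hmix a b ha hb hab y₁ (f y₁ hyU1) y₂ (f y₂ hyU2) (hf1 _ _) (hf1 _ _)
      have hd : Metric.infDist θb (Γ (a • y₁ + b • y₂))
          ≤ dist (a • f y₁ hyU1 + b • f y₂ hyU2) θb := by
        rw [dist_comm]
        exact Metric.infDist_le_dist_of_mem hmem
      have hd2 := (convexOn_dist θb (convex_univ (𝕜 := ℝ))).2 (Set.mem_univ (f y₁ hyU1))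
        (Set.mem_univ (f y₂ hyU2)) ha hb hab
      simp only [smul_eq_mul] at hd2 ⊢
      calc Metric.infDist θb (Γ (a • y₁ + b • y₂))
          ≤ dist (a • f y₁ hyU1 + b • f y₂ hyU2) θb := hd
        _ ≤ a * dist (f y₁ hyU1) θb + b * dist (f y₂ hyU2) θb := hd2
        _ = a * Metric.infDist θb (Γ y₁) + b * Metric.infDist θb (Γ y₂) := by
            rw [hf2 y₁ hyU1, hf2 y₂ hyU2, dist_comm θb, dist_comm θb]
    have hcont : ContinuousAt (fun y => Metric.infDist θb (Γ y)) yb :=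
      (hconv.continuousOn Metric.isOpen_ball).continuousAt
        (Metric.isOpen_ball.mem_nhds (Metric.mem_ball_self hρ0))
    have h0 : Metric.infDist θb (Γ yb) = 0 := Metric.infDist_zero_of_mem hθb
    refine ⟨fun n => f (yn n) (hynU n), fun n => hf1 _ _, ?_⟩
    rw [tendsto_iff_dist_tendsto_zero]
    have heq2 : (fun n => dist (f (yn n) (hynU n)) θb)
        = fun n => Metric.infDist θb (Γ (yn n)) := by
      funext n; rw [hf2 (yn n) (hynU n), dist_comm]
    rw [heq2]
    have hcomp := hcont.tendsto.comp hyn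
    rwa [h0] at hcomp
  -- upper semicontinuity of μ ⇒ lower semicontinuity of the gap along sequences
  have husc : ∀ (pb : EuclideanSpace ℝ (Fin m₁) × EuclideanSpace ℝ (Fin m₂))
      (pn : ℕ → EuclideanSpace ℝ (Fin m₁) × EuclideanSpace ℝ (Fin m₂)) (a : ℝ) (an : ℕ → ℝ),
      pb.1 ∈ U → (∀ n, (pn n).1 ∈ U) → Filter.Tendsto pn Filter.atTop (nhds pb) →
      (∀ n, ⟪F (pn n), (pn n).2⟫ - μ (pn n) ≤ an n) →
      Filter.Tendsto an Filter.atTop (nhds a) →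
      ⟪F pb, pb.2⟫ - μ pb ≤ a := by
    intro pb pn a an hpbU hpnU hpn hgn han
    by_contra hlt
    push_neg at hlt
    set η := (⟪F pb, pb.2⟫ - μ pb - a) / 2 with hηdef
    have hη0 : 0 < η := by simp only [hηdef]; linarith
    have hne : ((fun θ => ⟪F pb, θ⟫ + (1 / (2 * γ)) * ‖θ - pb.2‖ ^ 2) '' Γ pb.1).Nonempty :=
      (hΓne pb.1 hpbU).image _
    have hslt : sInf ((fun θ => ⟪F pb, θ⟫ + (1 / (2 * γ)) * ‖θ - pb.2‖ ^ 2) '' Γ pb.1)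
        < μ pb + η := by rw [← hμ]; linarith
    obtain ⟨v, hv, hvlt⟩ := exists_lt_of_csInf_lt hne hslt
    obtain ⟨θb, hθb, rfl⟩ := hv
    obtain ⟨θn, hθn, hθnlim⟩ := hkey pb.1 hpbU θb hθb (fun n => (pn n).1) hpnU
      ((continuous_fst.tendsto pb).comp hpn)
    have hlow : ∀ n, ⟪F (pn n), (pn n).2⟫ -
        (⟪F (pn n), θn n⟫ + (1 / (2 * γ)) * ‖θn n - (pn n).2‖ ^ 2) ≤ an n := by
      intro n
      have hμn := hμle (pn n) (θn n) (hθn n)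
      linarith [hgn n]
    have hc : Continuous (fun q : (EuclideanSpace ℝ (Fin m₁) × EuclideanSpace ℝ (Fin m₂))
        × EuclideanSpace ℝ (Fin m₂) =>
        ⟪F q.1, q.1.2⟫ - (⟪F q.1, q.2⟫ + (1 / (2 * γ)) * ‖q.2 - q.1.2‖ ^ 2)) := by
      apply Continuous.sub
      · exact (hF.comp continuous_fst).inner continuous_fst.snd
      · exact ((hF.comp continuous_fst).inner continuous_snd).add
          (continuous_const.mul ((continuous_snd.sub continuous_fst.snd).norm.pow 2))
    have hΦ := (hc.tendsto (pb, θb)).comp (hpn.prodMk_nhds hθnlim)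
    have hfin : ⟪F pb, pb.2⟫ - (⟪F pb, θb⟫ + (1 / (2 * γ)) * ‖θb - pb.2‖ ^ 2) ≤ a :=
      le_of_tendsto_of_tendsto' hΦ han hlow
    linarith
  -- the compact sack K
  obtain ⟨p₀, hp₀⟩ := hSne
  obtain ⟨R, hR⟩ := hScpt.isBounded.subset_closedBall p₀
  have hKcl : IsClosed {p : EuclideanSpace ℝ (Fin m₁) × EuclideanSpace ℝ (Fin m₂) |
      Metric.infDist p Sstar ≤ δ / 2} :=
    isClosed_le (Metric.continuous_infDist_pt Sstar) continuous_const
  have hKcpt : IsCompact {p : EuclideanSpace ℝ (Fin m₁) × EuclideanSpace ℝ (Fin m₂) |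
      Metric.infDist p Sstar ≤ δ / 2} := by
    apply Metric.isCompact_of_isClosed_isBounded hKcl
    have hsub : {p : EuclideanSpace ℝ (Fin m₁) × EuclideanSpace ℝ (Fin m₂) |
        Metric.infDist p Sstar ≤ δ / 2} ⊆ Metric.closedBall p₀ (δ / 2 + R) := by
      intro p hp
      obtain ⟨q, hq, hqd⟩ := hScpt.exists_infDist_eq_dist ⟨p₀, hp₀⟩ p
      have h1 : dist p q ≤ δ / 2 := by rw [← hqd]; exact hp
      have h2 : dist q p₀ ≤ R := hR hq
      have h3 : dist p p₀ ≤ dist p q + dist q p₀ := dist_triangle _ _ _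
      exact Metric.mem_closedBall.mpr (by linarith)
    exact Metric.isBounded_closedBall.subset hsub
  -- Sstar is contained in every relaxed feasible set intersected with K
  have hSsub : ∀ ε : ℝ, 0 ≤ ε → ∀ p ∈ Sstar,
      p ∈ ({p : EuclideanSpace ℝ (Fin m₁) × EuclideanSpace ℝ (Fin m₂) |
        p.1 ∈ Y ∧ p.2 ∈ Γ p.1 ∧ ⟪F p, p.2⟫ - μ p ≤ ε} ∩
        {p | Metric.infDist p Sstar ≤ δ / 2}) := by
    intro ε hε p hp
    have hp' := hp
    rw [hSstar] at hp'
    obtain ⟨hp1, hp2, hp3⟩ := hp'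
    have hpΓ : p.2 ∈ Γ p.1 := by
      have h := hp2; rw [hS] at h; exact h.1
    refine ⟨⟨hp1, hpΓ, le_trans (hS_gap p hp2) hε⟩, ?_⟩
    show Metric.infDist p Sstar ≤ δ / 2
    rw [Metric.infDist_zero_of_mem hp]
    linarith
  -- compactness of the truncated relaxed feasible sets
  have hCcpt : ∀ ε : ℝ, IsCompact
      ({p : EuclideanSpace ℝ (Fin m₁) × EuclideanSpace ℝ (Fin m₂) |
        p.1 ∈ Y ∧ p.2 ∈ Γ p.1 ∧ ⟪F p, p.2⟫ - μ p ≤ ε} ∩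
        {p | Metric.infDist p Sstar ≤ δ / 2}) := by
    intro ε
    apply hKcpt.of_isClosed_subset ?_ Set.inter_subset_right
    apply IsSeqClosed.isClosed
    intro pn pb hmem hlim
    have h1 : pb.1 ∈ Y := hYcl.mem_of_tendsto ((continuous_fst.tendsto pb).comp hlim)
      (Filter.Eventually.of_forall fun n => (hmem n).1.1)
    have h2 : pb.2 ∈ Γ pb.1 := by
      rw [hΓ]
      intro i
      have hn : ∀ n, ζ i (pn n) ≤ 0 := by
        intro n
        have hh := (hmem n).1.2.1
        rw [hΓ] at hh
        exact hh i
      exact le_of_tendsto ((hζcont i).continuousAt.tendsto.comp hlim)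
        (Filter.Eventually.of_forall hn)
    refine ⟨⟨h1, h2, ?_⟩, hKcl.mem_of_tendsto hlim
      (Filter.Eventually.of_forall fun n => (hmem n).2)⟩
    exact husc pb pn ε (fun _ => ε) (hYU h1) (fun n => hYU (hmem n).1.1) hlim
      (fun n => (hmem n).1.2.2) tendsto_const_nhds
  -- main contradiction argument
  by_contra hcon
  push_neg at hcon
  choose εn hεn hnog using fun n : ℕ => hcon (1 / ((n : ℝ) + 1)) (by positivity)
  have hmin : ∀ n : ℕ, ∃ p, p ∈ ({p : EuclideanSpace ℝ (Fin m₁) × EuclideanSpace ℝ (Fin m₂) |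
      p.1 ∈ Y ∧ p.2 ∈ Γ p.1 ∧ ⟪F p, p.2⟫ - μ p ≤ εn n} ∩
      {p | Metric.infDist p Sstar ≤ δ / 2}) ∧
      ∀ q ∈ ({p : EuclideanSpace ℝ (Fin m₁) × EuclideanSpace ℝ (Fin m₂) |
        p.1 ∈ Y ∧ p.2 ∈ Γ p.1 ∧ ⟪F p, p.2⟫ - μ p ≤ εn n} ∩
        {p | Metric.infDist p Sstar ≤ δ / 2}), Ψ p ≤ Ψ q := by
    intro n
    obtain ⟨p, hp, hpmin⟩ := (hCcpt (εn n)).exists_isMinOn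
      ⟨p₀, hSsub (εn n) (hεn n).1.le p₀ hp₀⟩ hΨ.continuousOn
    exact ⟨p, hp, fun q hq => hpmin hq⟩
  choose pn hpn hpnmin using hmin
  have hfar : ∀ n, δ / 2 ≤ Metric.infDist (pn n) Sstar := by
    intro n
    by_contra hltf
    push_neg at hltf
    have hloc : IsLocalMinOn Ψ {p : EuclideanSpace ℝ (Fin m₁) × EuclideanSpace ℝ (Fin m₂) |
        p.1 ∈ Y ∧ p.2 ∈ Γ p.1 ∧ ⟪F p, p.2⟫ - μ p ≤ εn n} (pn n) := by
      have hball : Metric.ball (pn n) (δ / 2 - Metric.infDist (pn n) Sstar) ∈ nhds (pn n) :=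
        Metric.ball_mem_nhds _ (by linarith)
      have hev : ∀ᶠ q in nhdsWithin (pn n)
          {p : EuclideanSpace ℝ (Fin m₁) × EuclideanSpace ℝ (Fin m₂) |
            p.1 ∈ Y ∧ p.2 ∈ Γ p.1 ∧ ⟪F p, p.2⟫ - μ p ≤ εn n}, Ψ (pn n) ≤ Ψ q := by
        rw [eventually_nhdsWithin_iff]
        filter_upwards [hball] with q hq hqC
        apply hpnmin n q
        refine ⟨hqC, ?_⟩
        show Metric.infDist q Sstar ≤ δ / 2
        have ha1 : Metric.infDist q Sstar ≤ Metric.infDist (pn n) Sstar + dist q (pn n) :=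
          Metric.infDist_le_infDist_add_dist
        have ha2 : dist q (pn n) < δ / 2 - Metric.infDist (pn n) Sstar := Metric.mem_ball.mp hq
        linarith
      exact hev
    have := hnog n (pn n) (hpn n).1 hloc
    linarith
  obtain ⟨pb, hpbK, φ, hφmono, hφlim⟩ := hKcpt.tendsto_subseq (fun n => (hpn n).2)
  have hpbY : pb.1 ∈ Y := hYcl.mem_of_tendsto ((continuous_fst.tendsto pb).comp hφlim)
    (Filter.Eventually.of_forall fun n => (hpn (φ n)).1.1)
  have hpbΓ : pb.2 ∈ Γ pb.1 := by
    rw [hΓ]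
    intro i
    have hn : ∀ n, ζ i (pn (φ n)) ≤ 0 := by
      intro n
      have hh := (hpn (φ n)).1.2.1
      rw [hΓ] at hh
      exact hh i
    exact le_of_tendsto ((hζcont i).continuousAt.tendsto.comp hφlim)
      (Filter.Eventually.of_forall hn)
  have hε0 : Filter.Tendsto (fun n => εn (φ n)) Filter.atTop (nhds 0) := by
    apply squeeze_zero (fun n => (hεn (φ n)).1.le) (fun n => (hεn (φ n)).2)
    exact tendsto_one_div_add_atTop_nhds_zero_nat.comp hφmono.tendsto_atTop
  have hgap0 : ⟪F pb, pb.2⟫ - μ pb ≤ 0 :=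
    husc pb (fun n => pn (φ n)) 0 (fun n => εn (φ n)) (hYU hpbY)
      (fun n => hYU (hpn (φ n)).1.1) hφlim (fun n => (hpn (φ n)).1.2.2) hε0
  have hpbS : pb.2 ∈ S pb.1 := hgap_S pb hpbΓ hgap0
  have hΨpb : Ψ pb ≤ Ψ p₀ := le_of_tendsto ((hΨ.tendsto pb).comp hφlim)
    (Filter.Eventually.of_forall fun n => hpnmin (φ n) p₀
      (hSsub (εn (φ n)) (hεn (φ n)).1.le p₀ hp₀))
  have hpbstar : pb ∈ Sstar := by
    rw [hSstar]
    refine ⟨hpbY, hpbS, fun q hq1 hq2 => ?_⟩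
    have hmin0 := hp₀
    rw [hSstar] at hmin0
    exact le_trans hΨpb (hmin0.2.2 q hq1 hq2)
  have hfinal : δ / 2 ≤ Metric.infDist pb Sstar :=
    ge_of_tendsto (((Metric.continuous_infDist_pt Sstar).tendsto pb).comp hφlim)
      (Filter.Eventually.of_forall fun n => hfar (φ n))
  rw [Metric.infDist_zero_of_mem hpbstar] at hfinal
  linarith
end
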